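/- arXiv:2010.06554 — 6 statements merged into one kernel-verified Lean document; each statement's English description precedes it below -/
import Mathlib

section
/- For i.i.d. copies ξ₁, ξ₂, ξ₃ of a discrete random variable ξ with |supp(ξ)| ≥ 2 and for either sign u ∈ {+1, −1}, every atom of ξ₁ + ξ₂ + u·ξ₃ has probability strictly less than ‖p‖₂²; in fact there exists c_ξ > 0 depending only on ξ such that P[ξ₁ + ξ₂ + u ξ₃ = s] ≤ ‖p‖₂² − c_ξ for all s ∈ ℝ. -/
/-!
Grouping by the value of `ξ₁`, `P[ξ₁ + ξ₂ + u ξ₃ = s] = ∑ᵢ pᵢ P[ξ₂ + u ξ₃ = s - aᵢ]`. For `u ≠ 0`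
the pairs `(j, l)` with `a j + u a l = t` form a partial matching, so AM-GM gives
`P[ξ₂ + u ξ₃ = t] ≤ ‖p‖₂²`, with equality only for a perfect matching, which forces
`k t = (1 + u) ∑ aᵢ`. So at most one of the `k ≥ 2` values `s - aᵢ` reaches `‖p‖₂²` and the
average stays strictly below it. The probability takes finitely many values as `(u, s)` varies,
which makes the gap uniform.
-/

open MeasureTheory ProbabilityTheory Finset

lemma exists_pos_forall_le_sub_of_finite_image {α : Type*} {f : α → ℝ} {S : Set α} {M : ℝ}
    (hf : (f '' S).Finite) (h : ∀ x ∈ S, f x < M) : ∃ c > 0, ∀ x ∈ S, f x ≤ M - c := by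
  rcases S.eq_empty_or_nonempty with rfl | hS
  · exact ⟨1, one_pos, by simp⟩
  obtain ⟨_, ⟨x₀, hx₀, rfl⟩, hmax⟩ := Set.exists_max_image (f '' S) id hf (hS.image f)
  refine ⟨M - f x₀, by linarith [h x₀ hx₀], fun x hx => ?_⟩
  have : f x ≤ f x₀ := hmax _ (Set.mem_image_of_mem f hx)
  linarith

section PartialMatching

variable {ι : Type*} [DecidableEq ι] {F : Finset (ι × ι)} {p : ι → ℝ}

lemma sum_mul_le_half_sum_sq_image (h₁ : Set.InjOn Prod.fst (F : Set (ι × ι)))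
    (h₂ : Set.InjOn Prod.snd (F : Set (ι × ι))) :
    ∑ q ∈ F, p q.1 * p q.2 ≤
      (∑ i ∈ F.image Prod.fst, p i ^ 2 + ∑ i ∈ F.image Prod.snd, p i ^ 2) / 2 := by
  rw [sum_image h₁, sum_image h₂, ← sum_add_distrib, sum_div]
  gcongr with q
  linarith [two_mul_le_add_sq (p q.1) (p q.2)]

variable [Fintype ι]

lemma sum_mul_le_sum_sq_of_injOn (h₁ : Set.InjOn Prod.fst (F : Set (ι × ι)))
    (h₂ : Set.InjOn Prod.snd (F : Set (ι × ι))) :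
    ∑ q ∈ F, p q.1 * p q.2 ≤ ∑ i, p i ^ 2 := by
  have := sum_mul_le_half_sum_sq_image (p := p) h₁ h₂
  have h₁' := sum_le_univ_sum_of_nonneg (s := F.image Prod.fst) fun i => sq_nonneg (p i)
  have h₂' := sum_le_univ_sum_of_nonneg (s := F.image Prod.snd) fun i => sq_nonneg (p i)
  linarith

lemma image_eq_univ_of_sum_mul_eq_sum_sq (hp : ∀ i, 0 < p i)
    (h₁ : Set.InjOn Prod.fst (F : Set (ι × ι))) (h₂ : Set.InjOn Prod.snd (F : Set (ι × ι)))
    (h : ∑ q ∈ F, p q.1 * p q.2 = ∑ i, p i ^ 2) :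
    F.image Prod.fst = univ ∧ F.image Prod.snd = univ := by
  have hlt : ∀ s : Finset ι, s ≠ univ → ∑ i ∈ s, p i ^ 2 < ∑ i, p i ^ 2 := fun s hs => by
    obtain ⟨j, hj⟩ : ∃ j, j ∉ s := by simpa [eq_univ_iff_forall] using hs
    exact sum_lt_sum_of_subset (subset_univ s) (mem_univ j) hj (pow_pos (hp j) 2)
      fun i _ _ => sq_nonneg (p i)
  have hhalf := sum_mul_le_half_sum_sq_image (p := p) h₁ h₂
  have h₁' := sum_le_univ_sum_of_nonneg (s := F.image Prod.fst) fun i => sq_nonneg (p i)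
  have h₂' := sum_le_univ_sum_of_nonneg (s := F.image Prod.snd) fun i => sq_nonneg (p i)
  constructor <;> by_contra hne <;> linarith [hlt _ hne]

end PartialMatching

section LinearFibres

variable {ι : Type*} [Fintype ι] {a : ι → ℝ} {p : ι → ℝ} {u : ℝ}

/-- `P[η₁ + u η₂ = t]` for independent `η₁, η₂` taking the value `a i` with probability `p i`. -/
noncomputable def pairMass (a p : ι → ℝ) (u t : ℝ) : ℝ :=
  ∑ q : ι × ι with a q.1 + u * a q.2 = t, p q.1 * p q.2

noncomputable def tripleMass (a p : ι → ℝ) (u s : ℝ) : ℝ :=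
  ∑ v : ι × ι × ι with a v.1 + a v.2.1 + u * a v.2.2 = s, p v.1 * p v.2.1 * p v.2.2

lemma injOn_fst_filter (ha : Function.Injective a) (hu : u ≠ 0) (t : ℝ) :
    Set.InjOn Prod.fst (({q : ι × ι | a q.1 + u * a q.2 = t} : Finset (ι × ι)) : Set (ι × ι)) := by
  intro q hq q' hq' h
  simp only [coe_filter, mem_univ, true_and, Set.mem_ofPred_eq] at hq hq'
  rw [h] at hq
  exact Prod.ext h (ha (mul_left_cancel₀ hu (by linarith)))

lemma injOn_snd_filter (ha : Function.Injective a) (t : ℝ) :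
    Set.InjOn Prod.snd (({q : ι × ι | a q.1 + u * a q.2 = t} : Finset (ι × ι)) : Set (ι × ι)) := by
  intro q hq q' hq' h
  simp only [coe_filter, mem_univ, true_and, Set.mem_ofPred_eq] at hq hq'
  rw [h] at hq
  exact Prod.ext (ha (by linarith)) h

lemma pairMass_le (ha : Function.Injective a) (hu : u ≠ 0) (t : ℝ) :
    pairMass a p u t ≤ ∑ i, p i ^ 2 := by
  classical
  exact sum_mul_le_sum_sq_of_injOn (injOn_fst_filter ha hu t) (injOn_snd_filter ha t)

lemma card_mul_eq_of_pairMass_eq (ha : Function.Injective a) (hp : ∀ i, 0 < p i) (hu : u ≠ 0)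
    {t : ℝ} (h : pairMass a p u t = ∑ i, p i ^ 2) :
    (Fintype.card ι : ℝ) * t = (1 + u) * ∑ i, a i := by
  classical
  set F : Finset (ι × ι) := {q | a q.1 + u * a q.2 = t}
  have hfst := injOn_fst_filter ha hu t
  have hsnd := injOn_snd_filter (u := u) ha t
  obtain ⟨himg₁, himg₂⟩ := image_eq_univ_of_sum_mul_eq_sum_sq hp hfst hsnd h
  have hcard : #F = Fintype.card ι := by rw [← card_image_of_injOn hfst, himg₁, card_univ]
  calc (Fintype.card ι : ℝ) * t = ∑ q ∈ F, (a q.1 + u * a q.2) := by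
        rw [sum_congr rfl fun q hq => (mem_filter.1 hq).2, sum_const, hcard, nsmul_eq_mul]
    _ = ∑ q ∈ F, a q.1 + u * ∑ q ∈ F, a q.2 := by rw [sum_add_distrib, mul_sum]
    _ = (1 + u) * ∑ i, a i := by
        rw [← sum_image hfst, ← sum_image hsnd, himg₁, himg₂]
        ring

lemma tripleMass_eq_sum_mul_pairMass (s : ℝ) :
    tripleMass a p u s = ∑ i, p i * pairMass a p u (s - a i) := by
  simp only [tripleMass, pairMass, sum_filter, mul_sum, Fintype.sum_prod_type]
  refine sum_congr rfl fun i _ => sum_congr rfl fun j _ => sum_congr rfl fun l _ => ?_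
  by_cases h : a j + u * a l = s - a i
  · rw [if_pos (by linarith), if_pos h, mul_assoc]
  · rw [if_neg (fun h' => h (by linarith)), if_neg h, mul_zero]

lemma tripleMass_lt [Nontrivial ι] (ha : Function.Injective a) (hp : ∀ i, 0 < p i)
    (hsum : ∑ i, p i = 1) (hu : u ≠ 0) (s : ℝ) :
    tripleMass a p u s < ∑ i, p i ^ 2 := by
  obtain ⟨i, hi⟩ : ∃ i, pairMass a p u (s - a i) < ∑ i, p i ^ 2 := by
    obtain ⟨i, j, hij⟩ := exists_pair_ne ι
    by_contra! h
    have hi := card_mul_eq_of_pairMass_eq ha hp hu (le_antisymm (pairMass_le ha hu _) (h i))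
    have hj := card_mul_eq_of_pairMass_eq ha hp hu (le_antisymm (pairMass_le ha hu _) (h j))
    have := mul_left_cancel₀ (Nat.cast_ne_zero.2 Fintype.card_ne_zero) (hi.trans hj.symm)
    exact hij (ha (by linarith))
  calc tripleMass a p u s = ∑ i, p i * pairMass a p u (s - a i) :=
        tripleMass_eq_sum_mul_pairMass s
    _ < ∑ i, p i * ∑ i, p i ^ 2 :=
        sum_lt_sum (fun j _ => mul_le_mul_of_nonneg_left (pairMass_le ha hu _) (hp j).le)
          ⟨i, mem_univ i, mul_lt_mul_of_pos_left hi (hp i)⟩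
    _ = ∑ i, p i ^ 2 := by rw [← sum_mul, hsum, one_mul]

variable (a p) in
lemma finite_range_tripleMass : (Set.range (Function.uncurry (tripleMass a p))).Finite := by
  refine (Set.finite_range fun S : Finset (ι × ι × ι) => ∑ v ∈ S, p v.1 * p v.2.1 * p v.2.2).subset ?_
  rintro _ ⟨⟨u, s⟩, rfl⟩
  exact ⟨_, rfl⟩

lemma exists_pos_forall_tripleMass_le [Nontrivial ι] (ha : Function.Injective a)
    (hp : ∀ i, 0 < p i) (hsum : ∑ i, p i = 1) :
    ∃ c > 0, ∀ u : ℝ, (u = 1 ∨ u = -1) → ∀ s, tripleMass a p u s ≤ ∑ i, p i ^ 2 - c := by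
  obtain ⟨c, hc, h⟩ := exists_pos_forall_le_sub_of_finite_image
    ((finite_range_tripleMass a p).subset (Set.image_subset_range _ {x | x.1 = 1 ∨ x.1 = -1}))
    fun x hx => tripleMass_lt ha hp hsum (by rcases hx with h | h <;> simp [h]) x.2
  exact ⟨c, hc, fun u hu s => h (u, s) hu⟩

end LinearFibres

section Probability

variable {Ω : Type*} [MeasurableSpace Ω] {μ : Measure Ω}

lemma ProbabilityTheory.iIndepFun.measure_inter_preimage_eq_mul_three {β : Type*} [MeasurableSpace β]
    {X Y Z : Ω → β} (h : iIndepFun ![X, Y, Z] μ) {A B C : Set β} (hA : MeasurableSet A)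
    (hB : MeasurableSet B) (hC : MeasurableSet C) :
    μ (X ⁻¹' A ∩ Y ⁻¹' B ∩ Z ⁻¹' C) = μ (X ⁻¹' A) * μ (Y ⁻¹' B) * μ (Z ⁻¹' C) := by
  have := h.measure_inter_preimage_eq_mul univ (sets := ![A, B, C])
    (by simp [Fin.forall_fin_succ, hA, hB, hC])
  calc μ (X ⁻¹' A ∩ Y ⁻¹' B ∩ Z ⁻¹' C) = μ (⋂ i ∈ univ, ![X, Y, Z] i ⁻¹' ![A, B, C] i) := by
        congr 1
        ext ω
        simp [Fin.forall_fin_succ, and_assoc]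
    _ = μ (X ⁻¹' A) * μ (Y ⁻¹' B) * μ (Z ⁻¹' C) := by rw [this, Fin.prod_univ_three]; rfl

lemma measure_le_ofReal_tripleMass {ι : Type*} [Fintype ι] {a p : ι → ℝ} (hp : ∀ i, 0 ≤ p i)
    {ξ₁ ξ₂ ξ₃ : Ω → ℝ} (hindep : iIndepFun ![ξ₁, ξ₂, ξ₃] μ)
    (hlaw₁ : ∀ i, μ {ω | ξ₁ ω = a i} = ENNReal.ofReal (p i))
    (hlaw₂ : ∀ i, μ {ω | ξ₂ ω = a i} = ENNReal.ofReal (p i))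
    (hlaw₃ : ∀ i, μ {ω | ξ₃ ω = a i} = ENNReal.ofReal (p i))
    (hsupp : ∀ᵐ ω ∂μ, ξ₁ ω ∈ Set.range a ∧ ξ₂ ω ∈ Set.range a ∧ ξ₃ ω ∈ Set.range a)
    (u s : ℝ) :
    μ {ω | ξ₁ ω + ξ₂ ω + u * ξ₃ ω = s} ≤ ENNReal.ofReal (tripleMass a p u s) := by
  set F : Finset (ι × ι × ι) := {v | a v.1 + a v.2.1 + u * a v.2.2 = s}
  let box (v : ι × ι × ι) : Set Ω := ξ₁ ⁻¹' {a v.1} ∩ ξ₂ ⁻¹' {a v.2.1} ∩ ξ₃ ⁻¹' {a v.2.2}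
  have hcover : {ω | ξ₁ ω + ξ₂ ω + u * ξ₃ ω = s} ≤ᵐ[μ] ⋃ v ∈ F, box v := by
    filter_upwards [hsupp] with ω ⟨⟨i, hi⟩, ⟨j, hj⟩, ⟨l, hl⟩⟩ (hω : ξ₁ ω + ξ₂ ω + u * ξ₃ ω = s)
    refine Set.mem_biUnion (x := (i, j, l)) ?_ ⟨⟨hi.symm, hj.symm⟩, hl.symm⟩
    simpa [F, hi, hj, hl] using hω
  have hbox : ∀ v, μ (box v) = ENNReal.ofReal (p v.1 * p v.2.1 * p v.2.2) := fun ⟨i, j, l⟩ => by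
    rw [ENNReal.ofReal_mul (mul_nonneg (hp i) (hp j)), ENNReal.ofReal_mul (hp i), ← hlaw₁, ← hlaw₂, ← hlaw₃]
    exact hindep.measure_inter_preimage_eq_mul_three (measurableSet_singleton _)
      (measurableSet_singleton _) (measurableSet_singleton _)
  calc μ {ω | ξ₁ ω + ξ₂ ω + u * ξ₃ ω = s} ≤ μ (⋃ v ∈ F, box v) := measure_mono_ae hcover
    _ ≤ ∑ v ∈ F, μ (box v) := measure_biUnion_finset_le F box
    _ = ENNReal.ofReal (tripleMass a p u s) := by
        rw [tripleMass, ENNReal.ofReal_sum_of_nonneg fun v _ =>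
          mul_nonneg (mul_nonneg (hp _) (hp _)) (hp _)]
        exact sum_congr rfl fun v _ => hbox v

end Probability

/-- For i.i.d. copies `ξ₁, ξ₂, ξ₃` of a discrete distribution with at least two atoms and
either sign `u ∈ {1, -1}`, there is `c > 0` with
`P[ξ₁ + ξ₂ + u·ξ₃ = s] ≤ ‖p‖₂² - c` for all `s`. -/
theorem stmt_4 {Ω : Type*} [MeasurableSpace Ω] (μ : Measure Ω) [IsProbabilityMeasure μ]
    {k : ℕ} (hk : 2 ≤ k) (a : Fin k → ℝ) (ha : Function.Injective a)
    (p : Fin k → ℝ) (hp : ∀ i, 0 < p i) (hsum : ∑ i, p i = 1)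
    (ξ₁ ξ₂ ξ₃ : Ω → ℝ) (hm₁ : Measurable ξ₁) (hm₂ : Measurable ξ₂) (hm₃ : Measurable ξ₃)
    (hindep : iIndepFun ![ξ₁, ξ₂, ξ₃] μ)
    (hlaw₁ : ∀ i, μ {ω | ξ₁ ω = a i} = ENNReal.ofReal (p i))
    (hlaw₂ : ∀ i, μ {ω | ξ₂ ω = a i} = ENNReal.ofReal (p i))
    (hlaw₃ : ∀ i, μ {ω | ξ₃ ω = a i} = ENNReal.ofReal (p i))
    (hsupp₁ : μ {ω | ξ₁ ω ∈ Set.range a} = 1)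
    (hsupp₂ : μ {ω | ξ₂ ω ∈ Set.range a} = 1)
    (hsupp₃ : μ {ω | ξ₃ ω ∈ Set.range a} = 1) :
    ∃ c : ℝ, 0 < c ∧
      ∀ u : ℝ, (u = 1 ∨ u = -1) →
      ∀ s : ℝ, μ {ω | ξ₁ ω + ξ₂ ω + u * ξ₃ ω = s} ≤
        ENNReal.ofReal ((∑ i, (p i) ^ 2) - c) := by
  have : Nontrivial (Fin k) := Fin.nontrivial_iff_two_le.2 hk
  obtain ⟨c, hc, hgap⟩ := exists_pos_forall_tripleMass_le ha hp hsum
  have hR : MeasurableSet (Set.range a) := (Set.finite_range a).measurableSet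
  have hsupp : ∀ᵐ ω ∂μ, ξ₁ ω ∈ Set.range a ∧ ξ₂ ω ∈ Set.range a ∧ ξ₃ ω ∈ Set.range a := by
    filter_upwards [(mem_ae_iff_prob_eq_one (hm₁ hR)).2 hsupp₁,
      (mem_ae_iff_prob_eq_one (hm₂ hR)).2 hsupp₂, (mem_ae_iff_prob_eq_one (hm₃ hR)).2 hsupp₃]
      with ω h₁ h₂ h₃ using ⟨h₁, h₂, h₃⟩
  refine ⟨c, hc, fun u hu s => ?_⟩
  exact (measure_le_ofReal_tripleMass (fun i => (hp i).le) hindep hlaw₁ hlaw₂ hlaw₃ hsupp u s).trans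
    (ENNReal.ofReal_le_ofReal (hgap u hu s))
end

section
/- Tensorization, small-ball version: if χ₁,…,χ_m are independent real random variables such that P[|χ_i| ≤ ε] ≤ Kε for all ε ≥ ε₀ and all i, then for all ε ≥ ε₀, P[‖(χ₁,…,χ_m)‖₂ ≤ ε√m] ≤ (CKε)^m for an absolute constant C. -/
/-
Exponential Chebyshev: on the event, `∑ (χᵢ/ε)² ≤ m`, so its probability is at most
`e^m E[exp(-∑ (χᵢ/ε)²)]`, which by independence is `e^m ∏ E[exp(-(χᵢ/ε)²)]`. Each factor is at most
`4Kε`: where `⌊|χᵢ|/ε⌋ = n` the integrand is at most `2⁻ⁿ`, while the small-ball bound gives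
`P[|χᵢ| ≤ (n+1)ε] ≤ Kε(n+1)`, and `∑ (n+1) 2⁻ⁿ = 4`. Hence `C = 4e` works.
-/

open MeasureTheory ProbabilityTheory Finset Real
open scoped ENNReal

lemma tsum_succ_mul_inv_two_pow : ∑' n : ℕ, ((n : ℝ≥0∞) + 1) * 2⁻¹ ^ n = 4 := by
  have hr : ‖(2⁻¹ : ℝ)‖ < 1 := by norm_num
  have h : HasSum (fun n : ℕ => ((n : ℝ) + 1) * 2⁻¹ ^ n) 4 := by
    have h := (hasSum_coe_mul_geometric_of_norm_lt_one hr).add (hasSum_geometric_of_norm_lt_one hr)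
    rw [show (2⁻¹ : ℝ) / (1 - 2⁻¹) ^ 2 + (1 - 2⁻¹)⁻¹ = 4 by norm_num] at h
    simpa only [add_one_mul] using h
  rw [← ENNReal.ofReal_ofNat 4, ← h.tsum_eq,
    ENNReal.ofReal_tsum_of_nonneg (fun n => by positivity) h.summable]
  congr 1 with n
  rw [ENNReal.ofReal_mul (by positivity), ENNReal.ofReal_pow (by norm_num),
    ENNReal.ofReal_inv_of_pos two_pos]
  norm_cast

lemma ofReal_exp_neg_sq_le_tsum (x : ℝ) :
    ENNReal.ofReal (exp (-x ^ 2)) ≤ ∑' n : ℕ, if |x| ≤ n + 1 then (2⁻¹ : ℝ≥0∞) ^ n else 0 := by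
  set n := ⌊|x|⌋₊
  have hn : (n : ℝ) ≤ x ^ 2 := by
    have h := Nat.floor_le (abs_nonneg x)
    rw [← sq_abs]
    nlinarith [show (0 : ℝ) ≤ n from n.cast_nonneg, show (n : ℝ) ≤ n ^ 2 from by
      exact_mod_cast Nat.le_self_pow two_ne_zero n]
  refine le_trans ?_ (ENNReal.le_tsum n)
  rw [if_pos (Nat.lt_floor_add_one |x|).le]
  calc ENNReal.ofReal (exp (-x ^ 2)) ≤ ENNReal.ofReal ((exp 1)⁻¹ ^ n) := by
        gcongr
        rw [← exp_neg, ← exp_nat_mul]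
        gcongr
        linarith
    _ ≤ ENNReal.ofReal (2⁻¹ ^ n) := by
        gcongr
        linarith [add_one_le_exp 1]
    _ = 2⁻¹ ^ n := by
        rw [ENNReal.ofReal_pow (by norm_num), ENNReal.ofReal_inv_of_pos two_pos]
        norm_cast

section

variable {Ω : Type*} [MeasurableSpace Ω] {μ : Measure Ω}

lemma lintegral_exp_neg_sq_div_le {X : Ω → ℝ} (hX : Measurable X) {K ε₀ ε : ℝ}
    (hsmall : ∀ t, ε₀ ≤ t → μ {ω | |X ω| ≤ t} ≤ ENNReal.ofReal (K * t))
    (hε₀ : ε₀ ≤ ε) (hε : 0 < ε) :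
    ∫⁻ ω, ENNReal.ofReal (exp (-(X ω / ε) ^ 2)) ∂μ ≤ ENNReal.ofReal (4 * K * ε) := by
  set S : ℕ → Set Ω := fun n => {ω | |X ω / ε| ≤ n + 1}
  have hS : ∀ n, MeasurableSet (S n) := fun n => measurableSet_le (by fun_prop) measurable_const
  have hμS : ∀ n : ℕ, μ (S n) ≤ ENNReal.ofReal (K * ε) * (n + 1) := fun n => by
    have hSn : S n = {ω | |X ω| ≤ ε * (n + 1)} := by
      ext ω
      simp only [S, Set.mem_ofPred_eq, abs_div, abs_of_pos hε, div_le_iff₀ hε, mul_comm]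
    calc μ (S n) ≤ ENNReal.ofReal (K * (ε * (n + 1))) :=
          hSn ▸ hsmall _ (hε₀.trans (le_mul_of_one_le_right hε.le (by simp)))
      _ = ENNReal.ofReal (K * ε) * (n + 1) := by
          rw [← mul_assoc, ENNReal.ofReal_mul' (by positivity)]
          norm_cast
  calc ∫⁻ ω, ENNReal.ofReal (exp (-(X ω / ε) ^ 2)) ∂μ
      ≤ ∫⁻ ω, ∑' n : ℕ, (S n).indicator (fun _ => 2⁻¹ ^ n) ω ∂μ :=
        lintegral_mono fun ω => (ofReal_exp_neg_sq_le_tsum _).trans_eq <| tsum_congr fun n => by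
          simp [S, Set.indicator_apply]
    _ = ∑' n : ℕ, 2⁻¹ ^ n * μ (S n) := by
        rw [lintegral_tsum fun n => (measurable_const.indicator (hS n)).aemeasurable]
        simp only [lintegral_indicator_const (hS _)]
    _ ≤ ∑' n : ℕ, ENNReal.ofReal (K * ε) * ((n + 1) * 2⁻¹ ^ n) :=
        ENNReal.tsum_le_tsum fun n => (mul_le_mul_right (hμS n) _).trans_eq (by ring)
    _ = ENNReal.ofReal (4 * K * ε) := by
        rw [ENNReal.tsum_mul_left, tsum_succ_mul_inv_two_pow, show 4 * K * ε = K * ε * 4 by ring,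
          ENNReal.ofReal_mul' (p := K * ε) (by norm_num), ENNReal.ofReal_ofNat]

lemma mgf_sq_div_neg_one_le {X : Ω → ℝ} (hX : Measurable X) {K ε₀ ε : ℝ} (hK : 0 ≤ K)
    (hsmall : ∀ t, ε₀ ≤ t → μ {ω | |X ω| ≤ t} ≤ ENNReal.ofReal (K * t))
    (hε₀ : ε₀ ≤ ε) (hε : 0 < ε) :
    mgf (fun ω => (X ω / ε) ^ 2) μ (-1) ≤ 4 * K * ε := by
  rw [mgf, integral_eq_lintegral_of_nonneg_ae (ae_of_all _ fun _ => (exp_pos _).le)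
    (by fun_prop)]
  refine ENNReal.toReal_le_of_le_ofReal (by positivity) ?_
  simpa only [neg_one_mul] using lintegral_exp_neg_sq_div_le hX hsmall hε₀ hε

lemma measureReal_sum_le_le_exp_mul_prod_mgf [IsProbabilityMeasure μ] {ι : Type*} [Fintype ι]
    {Y : ι → Ω → ℝ} (hY : ∀ i, Measurable (Y i)) (hY₀ : ∀ i ω, 0 ≤ Y i ω)
    (hind : iIndepFun Y μ) (r : ℝ) :
    μ.real {ω | ∑ i, Y i ω ≤ r} ≤ exp r * ∏ i, mgf (Y i) μ (-1) := by
  have hint : Integrable (fun ω => exp (-1 * ∑ i, Y i ω)) μ := by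
    refine (integrable_const (1 : ℝ)).mono' (by fun_prop) (ae_of_all _ fun ω => ?_)
    rw [norm_of_nonneg (exp_pos _).le, exp_le_one_iff, neg_one_mul, neg_nonpos]
    exact sum_nonneg fun i _ => hY₀ i ω
  have h := measure_le_le_exp_mul_mgf (X := ∑ i, Y i) r (t := -1) (by norm_num)
    (by simpa only [Finset.sum_apply] using hint)
  rw [hind.mgf_sum hY, neg_neg, one_mul] at h
  simpa only [Finset.sum_apply] using h

lemma abs_le_sqrt_sum_sq {ι : Type*} [Fintype ι] (x : ι → ℝ) (i : ι) :
    |x i| ≤ √(∑ j, x j ^ 2) :=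
  abs_le_sqrt (single_le_sum (fun j _ => sq_nonneg (x j)) (mem_univ i))

theorem measure_sqrt_sum_sq_le_le [IsProbabilityMeasure μ] {ι : Type*} [Fintype ι]
    {χ : ι → Ω → ℝ} (hχ : ∀ i, Measurable (χ i)) (hind : iIndepFun χ μ) {K ε₀ ε : ℝ}
    (hK : 0 ≤ K) (hsmall : ∀ i t, ε₀ ≤ t → μ {ω | |χ i ω| ≤ t} ≤ ENNReal.ofReal (K * t))
    (hε₀ : ε₀ ≤ ε) (hε : 0 < ε) :
    μ {ω | √(∑ i, χ i ω ^ 2) ≤ ε * √(Fintype.card ι)} ≤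
      ENNReal.ofReal ((4 * exp 1 * K * ε) ^ Fintype.card ι) := by
  set m := Fintype.card ι
  set Y : ι → Ω → ℝ := fun i ω => (χ i ω / ε) ^ 2
  have hevent : {ω | √(∑ i, χ i ω ^ 2) ≤ ε * √m} ⊆ {ω | ∑ i, Y i ω ≤ m} := fun ω hω => by
    have h : ∑ i, χ i ω ^ 2 ≤ ε ^ 2 * m := by
      rwa [Set.mem_ofPred_eq, ← sqrt_sq hε.le, ← sqrt_mul (sq_nonneg _),
        sqrt_le_sqrt_iff (by positivity)] at hω
    simp only [Set.mem_ofPred_eq, Y, div_pow, ← sum_div]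
    rw [div_le_iff₀ (by positivity)]
    linarith
  have hchernoff := measureReal_sum_le_le_exp_mul_prod_mgf (fun i => by fun_prop)
    (fun i ω => sq_nonneg _) (hind.comp (fun _ x => (x / ε) ^ 2) fun _ => by fun_prop) (m : ℝ)
  have hfactors : ∏ i, mgf (Y i) μ (-1) ≤ (4 * K * ε) ^ m := by
    calc ∏ i, mgf (Y i) μ (-1) ≤ ∏ _i : ι, 4 * K * ε :=
          prod_le_prod (fun _ _ => mgf_nonneg)
            fun i _ => mgf_sq_div_neg_one_le (hχ i) hK (hsmall i) hε₀ hε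
      _ = (4 * K * ε) ^ m := by rw [prod_const, card_univ]
  calc μ {ω | √(∑ i, χ i ω ^ 2) ≤ ε * √m} ≤ μ {ω | ∑ i, Y i ω ≤ m} := measure_mono hevent
    _ = ENNReal.ofReal (μ.real {ω | ∑ i, Y i ω ≤ m}) := (ofReal_measureReal).symm
    _ ≤ ENNReal.ofReal (exp m * (4 * K * ε) ^ m) := by
        gcongr
        exact hchernoff.trans (by gcongr)
    _ = ENNReal.ofReal ((4 * exp 1 * K * ε) ^ m) := by
        rw [← exp_one_pow, ← mul_pow]
        ring_nf

end

/-- Tensorization, small-ball version: there is an absolute constant `C` such that if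
`χ₁,…,χ_m` are independent with `P[|χᵢ| ≤ ε] ≤ Kε` for all `ε ≥ ε₀`, then for `ε ≥ ε₀`,
`P[‖(χ₁,…,χ_m)‖₂ ≤ ε√m] ≤ (CKε)^m`. -/
theorem stmt_5 :
    ∃ C : ℝ, 0 < C ∧
      ∀ (m : ℕ) (Ω : Type) (_ : MeasurableSpace Ω) (μ : Measure Ω),
        IsProbabilityMeasure μ →
        ∀ (χ : Fin m → Ω → ℝ), (∀ i, Measurable (χ i)) →
        iIndepFun χ μ →
        ∀ (K ε₀ : ℝ), 0 < K → 0 ≤ ε₀ →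
        (∀ i, ∀ ε : ℝ, ε₀ ≤ ε → μ {ω | |χ i ω| ≤ ε} ≤ ENNReal.ofReal (K * ε)) →
        ∀ ε : ℝ, ε₀ ≤ ε →
          μ {ω | Real.sqrt (∑ i, (χ i ω) ^ 2) ≤ ε * Real.sqrt m} ≤
            ENNReal.ofReal ((C * K * ε) ^ m) := by
  refine ⟨4 * exp 1, by positivity, ?_⟩
  intro m Ω _ μ _ χ hχ hind K ε₀ hK hε₀ hsmall ε hε
  obtain rfl | hε_pos := (hε₀.trans hε).eq_or_lt
  · rcases m with _ | m
    · simp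
    · calc μ {ω | √(∑ i, χ i ω ^ 2) ≤ 0 * √(m + 1 : ℕ)} ≤ μ {ω | |χ 0 ω| ≤ 0} :=
            measure_mono fun ω hω => (abs_le_sqrt_sum_sq (χ · ω) 0).trans (by simpa using hω)
        _ ≤ ENNReal.ofReal (K * 0) := hsmall 0 0 hε
        _ ≤ _ := by simp
  · simpa using measure_sqrt_sum_sq_le_le hχ hind hK.le hsmall hε hε_pos
end

section
/- Tensorization, fixed-scale version: if χ₁,…,χ_m are independent real random variables with P[|χ_i| ≤ η] ≤ τ for all i, then for every ε ∈ (0,1], P[‖(χ₁,…,χ_m)‖₂ ≤ η√(εm)] ≤ (e/ε)^{εm} τ^{m−εm}. -/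
/-!
Let `k = ⌊εm⌋`. If `‖χ‖₂ ≤ η√(εm)`, at most `k` coordinates exceed `η` in absolute value, so
some `m - k` of them lie in `[-η, η]`. By independence and a union bound over the `(m choose k)`
possible index sets, the event has probability at most `(m choose k) τ^(m-k)`. One term of the
binomial expansion of `(1 + ε)^m ≤ e^(εm)` gives `(m choose k) ≤ e^(εm) ε^(-k)`; finally
`ε^(-k) ≤ ε^(-εm)` and `τ^(m-k) ≤ τ^(m-εm)` since `ε, τ ≤ 1` (replace `τ` by `min τ 1`).
-/

open MeasureTheory ProbabilityTheory Finset

theorem Nat.choose_mul_pow_le_exp (m k : ℕ) {x : ℝ} (hx : 0 ≤ x) :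
    m.choose k * x ^ k ≤ Real.exp (x * m) := by
  rcases lt_or_ge m k with hmk | hkm
  · rw [Nat.choose_eq_zero_of_lt hmk, Nat.cast_zero, zero_mul]
    positivity
  calc (m.choose k : ℝ) * x ^ k = x ^ k * 1 ^ (m - k) * m.choose k := by ring
    _ ≤ ∑ j ∈ range (m + 1), x ^ j * 1 ^ (m - j) * m.choose j :=
        single_le_sum (f := fun j => x ^ j * 1 ^ (m - j) * (m.choose j : ℝ))
          (fun j _ => by positivity) (mem_range_succ_iff.2 hkm)
    _ = (x + 1) ^ m := (add_pow x 1 m).symm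
    _ ≤ Real.exp x ^ m := by gcongr; exact Real.add_one_le_exp x
    _ = Real.exp (x * m) := by rw [← Real.exp_nat_mul, mul_comm]

theorem Nat.choose_le_exp_div_rpow {m k : ℕ} {ε : ℝ} (hε : 0 < ε) (hε1 : ε ≤ 1)
    (hk : (k : ℝ) ≤ ε * m) : (m.choose k : ℝ) ≤ (Real.exp 1 / ε) ^ (ε * m) := by
  have hpow : ε ^ (ε * m) ≤ ε ^ k := by
    rw [← Real.rpow_natCast]; exact Real.rpow_le_rpow_of_exponent_ge hε hε1 hk
  rw [Real.div_rpow (Real.exp_pos 1).le hε.le, Real.exp_one_rpow, le_div_iff₀ (by positivity)]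
  calc (m.choose k : ℝ) * ε ^ (ε * m) ≤ m.choose k * ε ^ k := by gcongr
    _ ≤ Real.exp (ε * m) := Nat.choose_mul_pow_le_exp m k hε.le

theorem card_filter_lt_abs_mul_sq_le {ι : Type*} [Fintype ι] (x : ι → ℝ) {η : ℝ}
    (hη : 0 ≤ η) : #{i | η < |x i|} * η ^ 2 ≤ ∑ i, x i ^ 2 := by
  calc (#{i | η < |x i|} : ℝ) * η ^ 2 = ∑ i with η < |x i|, η ^ 2 := by
        rw [sum_const, nsmul_eq_mul]
    _ ≤ ∑ i with η < |x i|, x i ^ 2 := by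
        refine sum_le_sum fun i hi => ?_
        rw [← sq_abs (x i)]
        exact pow_le_pow_left₀ hη (mem_filter.1 hi).2.le 2
    _ ≤ ∑ i, x i ^ 2 := sum_le_sum_of_subset_of_nonneg (subset_univ _) fun i _ _ => sq_nonneg _

theorem card_sub_floor_le_card_abs_le {ι : Type*} [Fintype ι] (x : ι → ℝ) {η c : ℝ}
    (hη : 0 < η) (hc : 0 ≤ c) (h : √(∑ i, x i ^ 2) ≤ η * √c) :
    Fintype.card ι - ⌊c⌋₊ ≤ #{i | |x i| ≤ η} := by
  have hsum : ∑ i, x i ^ 2 ≤ η ^ 2 * c := by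
    have := pow_le_pow_left₀ (Real.sqrt_nonneg _) h 2
    rwa [Real.sq_sqrt (by positivity), mul_pow, Real.sq_sqrt hc] at this
  have hlarge : #{i | η < |x i|} ≤ ⌊c⌋₊ := by
    refine Nat.le_floor (le_of_mul_le_mul_right ?_ (pow_pos hη 2))
    rw [mul_comm c]
    exact (card_filter_lt_abs_mul_sq_le x hη.le).trans hsum
  have hsplit := card_filter_add_card_filter_not (s := univ) (fun i => |x i| ≤ η)
  simp only [not_le, card_univ] at hsplit
  omega

theorem ProbabilityTheory.iIndepFun.measure_le_card_filter_mem_le {Ω ι β : Type*}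
    [MeasurableSpace Ω] {μ : Measure Ω} [Fintype ι] [MeasurableSpace β] {χ : ι → Ω → β}
    (hindep : iIndepFun χ μ) {B : Set β} (hB : MeasurableSet B) {p : ENNReal}
    (hp : ∀ i, μ (χ i ⁻¹' B) ≤ p) (s : ℕ)
    [∀ ω, DecidablePred fun i => χ i ω ∈ B] :
    μ {ω | s ≤ #{i | χ i ω ∈ B}} ≤ (Fintype.card ι).choose s * p ^ s := by
  have hcover :
      {ω | s ≤ #{i | χ i ω ∈ B}} ⊆ ⋃ S ∈ powersetCard s univ, ⋂ i ∈ S, χ i ⁻¹' B := by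
    intro ω hω
    obtain ⟨S, hS, hcard⟩ := exists_subset_card_eq hω
    refine Set.mem_iUnion₂.2 ⟨S, mem_powersetCard.2 ⟨subset_univ S, hcard⟩, ?_⟩
    exact Set.mem_iInter₂.2 fun i hi => (mem_filter.1 (hS hi)).2
  calc μ _ ≤ ∑ S ∈ powersetCard s univ, μ (⋂ i ∈ S, χ i ⁻¹' B) :=
        (measure_mono hcover).trans (measure_biUnion_finset_le _ _)
    _ ≤ ∑ S ∈ powersetCard s (univ : Finset ι), p ^ s := by
        refine sum_le_sum fun S hS => ?_
        rw [hindep.meas_biInter fun i _ => ⟨B, hB, rfl⟩, ← (mem_powersetCard.1 hS).2,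
          ← prod_const]
        exact prod_le_prod' fun i _ => hp i
    _ = (Fintype.card ι).choose s * p ^ s := by
        rw [sum_const, card_powersetCard, card_univ, nsmul_eq_mul]

theorem Nat.choose_mul_pow_sub_le {m k : ℕ} {ε τ : ℝ} (hε : 0 < ε) (hε1 : ε ≤ 1)
    (hτ : 0 < τ) (hτ1 : τ ≤ 1) (hk : (k : ℝ) ≤ ε * m) :
    m.choose k * τ ^ (m - k) ≤ (Real.exp 1 / ε) ^ (ε * m) * τ ^ (m - ε * m) := by
  have hkm : k ≤ m := by
    exact_mod_cast hk.trans (mul_le_of_le_one_left (Nat.cast_nonneg m) hε1)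
  have hτpow : τ ^ (m - k) ≤ τ ^ (m - ε * m) := by
    rw [← Real.rpow_natCast, Nat.cast_sub hkm]
    exact Real.rpow_le_rpow_of_exponent_ge hτ hτ1 (by linarith)
  exact mul_le_mul (Nat.choose_le_exp_div_rpow hε hε1 hk) hτpow (by positivity) (by positivity)

theorem stmt_6_general {Ω : Type*} [MeasurableSpace Ω] (μ : Measure Ω) [IsProbabilityMeasure μ]
    (m : ℕ) (χ : Fin m → Ω → ℝ)
    (hindep : iIndepFun χ μ)
    (η τ : ℝ) (hη : 0 < η) (hτ : 0 < τ)
    (hanti : ∀ i, μ {ω | |χ i ω| ≤ η} ≤ ENNReal.ofReal τ) :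
    ∀ ε : ℝ, 0 < ε → ε ≤ 1 →
      μ {ω | Real.sqrt (∑ i, (χ i ω) ^ 2) ≤ η * Real.sqrt (ε * m)} ≤
        ENNReal.ofReal ((Real.exp 1 / ε) ^ (ε * (m : ℝ)) *
          τ ^ ((m : ℝ) - ε * (m : ℝ))) := by
  intro ε hε hε1
  classical
  set k := ⌊ε * m⌋₊
  have hk : (k : ℝ) ≤ ε * m := Nat.floor_le (by positivity)
  have hεm : ε * m ≤ m := mul_le_of_le_one_left (Nat.cast_nonneg m) hε1
  have hsmall : ∀ i, μ (χ i ⁻¹' {x | |x| ≤ η}) ≤ ENNReal.ofReal (min τ 1) := by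
    intro i
    rw [ENNReal.ofReal_mono.map_min, ENNReal.ofReal_one]
    exact le_min (hanti i) prob_le_one
  have hevent : {ω | √(∑ i, χ i ω ^ 2) ≤ η * √(ε * m)} ⊆
      {ω | m - k ≤ #{i | χ i ω ∈ {x | |x| ≤ η}}} := fun ω hω => by
    simpa using card_sub_floor_le_card_abs_le (χ · ω) hη (by positivity) hω
  calc μ _ ≤ m.choose (m - k) * ENNReal.ofReal (min τ 1) ^ (m - k) := by
        simpa using (measure_mono hevent).trans (hindep.measure_le_card_filter_mem_le
          (measurableSet_le measurable_abs measurable_const) hsmall (m - k))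
    _ = ENNReal.ofReal (m.choose k * min τ 1 ^ (m - k)) := by
        rw [Nat.choose_symm (Nat.floor_le_of_le hεm), ENNReal.ofReal_mul (by positivity),
          ENNReal.ofReal_natCast, ENNReal.ofReal_pow (by positivity)]
    _ ≤ _ := by
        refine ENNReal.ofReal_le_ofReal ((Nat.choose_mul_pow_sub_le hε hε1
          (lt_min hτ one_pos) (min_le_right τ 1) hk).trans ?_)
        gcongr
        exact min_le_left τ 1

/-- Tensorization, fixed-scale version: if `χ₁,…,χ_m` are independent with
`P[|χᵢ| ≤ η] ≤ τ`, then for `ε ∈ (0,1]`,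
`P[‖(χ₁,…,χ_m)‖₂ ≤ η√(εm)] ≤ (e/ε)^{εm} τ^{m-εm}`. -/
theorem stmt_6 {Ω : Type*} [MeasurableSpace Ω] (μ : Measure Ω) [IsProbabilityMeasure μ]
    (m : ℕ) (χ : Fin m → Ω → ℝ) (hmeas : ∀ i, Measurable (χ i))
    (hindep : iIndepFun χ μ)
    (η τ : ℝ) (hη : 0 < η) (hτ : 0 < τ)
    (hanti : ∀ i, μ {ω | |χ i ω| ≤ η} ≤ ENNReal.ofReal τ) :
    ∀ ε : ℝ, 0 < ε → ε ≤ 1 →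
      μ {ω | Real.sqrt (∑ i, (χ i ω) ^ 2) ≤ η * Real.sqrt (ε * m)} ≤
        ENNReal.ofReal ((Real.exp 1 / ε) ^ (ε * (m : ℝ)) *
          τ ^ ((m : ℝ) - ε * (m : ℝ))) :=
  stmt_6_general μ m χ hindep η τ hη hτ hanti
end

section
/- Bounded increments in a step record: suppose (w₁,…,w_ℓ) ∈ [k]^ℓ, λ ∈ (0,1/3), and let J_j = {i : w_i = j and W_i(j)/i ≤ λ} where W_i(j) = #{u ≤ i : w_u = j}. Then ∏_{j=1}^k ∏_{i ∈ J_j} (i / W_i(j)) ≤ (e/λ)^{2kλℓ}. -/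
/-!
For a fixed letter `j`, the running count `W_i(j)` strictly increases along the positions where
`j` occurs, so on `J_j` it takes distinct values in `{1, …, ⌊λℓ⌋}`, and each factor `i / W_i(j)`
is at most `ℓ / W_i(j)`. Hence the `j`-th product is at most `ℓ^m / m!` with `m = ⌊λℓ⌋`, and
`ℓ^m / m! = λ^{-m} (λℓ)^m / m! ≤ λ^{-λℓ} e^{λℓ} = (e/λ)^{λℓ}`, using `x^m / m! ≤ e^x`.
-/

open Finset

section StepCount

variable {ℓ : ℕ} {α : Type*} [DecidableEq α]

def stepCount (w : Fin ℓ → α) (i : Fin ℓ) (j : α) : ℕ :=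
  #{u | u ≤ i ∧ w u = j}

variable {w : Fin ℓ → α} {i i' : Fin ℓ} {j : α}

lemma stepCount_pos (h : w i = j) : 0 < stepCount w i j :=
  card_pos.mpr ⟨i, by simp [h]⟩

lemma stepCount_lt_stepCount (hii' : i < i') (h : w i' = j) :
    stepCount w i j < stepCount w i' j := by
  refine card_lt_card ⟨fun u hu => ?_, fun hsub => ?_⟩
  · simp only [mem_filter, mem_univ, true_and] at hu ⊢
    exact ⟨hu.1.trans hii'.le, hu.2⟩
  · have := hsub (by simp [h] : i' ∈ _)
    simp only [mem_filter, mem_univ, true_and] at this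
    exact this.1.not_gt hii'

lemma stepCount_injOn : Set.InjOn (stepCount w · j) {i | w i = j} := by
  intro a ha b hb hab
  by_contra hne
  rcases lt_or_gt_of_ne hne with h | h
  · exact (stepCount_lt_stepCount h hb).ne hab
  · exact (stepCount_lt_stepCount h ha).ne' hab

end StepCount

lemma prod_Icc_div_le_rpow {L lam : ℝ} (hL : 0 ≤ L) (hlam : 0 < lam) (hlam1 : lam ≤ 1) :
    ∏ t ∈ Icc 1 ⌊lam * L⌋₊, L / t ≤ (Real.exp 1 / lam) ^ (lam * L) := by
  set m := ⌊lam * L⌋₊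
  have hm : (m : ℝ) ≤ lam * L := Nat.floor_le (by positivity)
  calc ∏ t ∈ Icc 1 m, L / t
      = (1 / lam) ^ m * ((lam * L) ^ m / m.factorial) := by
        rw [prod_div_distrib, prod_const, Nat.card_Icc, Nat.add_sub_cancel, ← Nat.cast_prod,
          ← Ico_add_one_right_eq_Icc, prod_Ico_id_eq_factorial, mul_pow, one_div_pow]
        field_simp
    _ ≤ (1 / lam) ^ (lam * L) * Real.exp (lam * L) := by
        gcongr
        · rw [← Real.rpow_natCast]
          exact Real.rpow_le_rpow_of_exponent_le (one_le_one_div hlam hlam1) hm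
        · exact Real.pow_div_factorial_le_exp _ (by positivity) m
    _ = (Real.exp 1 / lam) ^ (lam * L) := by
        rw [Real.div_rpow (Real.exp_pos 1).le hlam.le, Real.exp_one_rpow,
          Real.div_rpow zero_le_one hlam.le, Real.one_rpow]
        ring

lemma prod_filter_div_stepCount_le {ℓ : ℕ} {α : Type*} [DecidableEq α] (w : Fin ℓ → α) (j : α)
    {lam : ℝ} (hlam : 0 < lam) (hlam1 : lam ≤ 1) :
    ∏ i ∈ univ.filter (fun i : Fin ℓ => w i = j ∧ (stepCount w i j : ℝ) ≤ lam * ((i : ℕ) + 1)),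
      (((i : ℕ) : ℝ) + 1) / stepCount w i j ≤ (Real.exp 1 / lam) ^ (lam * ℓ) := by
  set J := univ.filter (fun i : Fin ℓ => w i = j ∧ (stepCount w i j : ℝ) ≤ lam * ((i : ℕ) + 1))
  have hJ : ∀ i ∈ J, w i = j ∧ (stepCount w i j : ℝ) ≤ lam * ((i : ℕ) + 1) := by
    intro i hi
    simpa [J] using hi
  have hsucc_le (i : Fin ℓ) : ((i : ℕ) : ℝ) + 1 ≤ ℓ := by exact_mod_cast i.isLt
  have hlamL : lam * ℓ ≤ ℓ := mul_le_of_le_one_left (Nat.cast_nonneg ℓ) hlam1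
  have himage : J.image (stepCount w · j) ⊆ Icc 1 ⌊lam * ℓ⌋₊ := by
    simp only [subset_iff, mem_image, mem_Icc]
    rintro _ ⟨i, hi, rfl⟩
    refine ⟨stepCount_pos (hJ i hi).1, Nat.le_floor ((hJ i hi).2.trans ?_)⟩
    gcongr
    exact hsucc_le i
  calc ∏ i ∈ J, (((i : ℕ) : ℝ) + 1) / stepCount w i j
      ≤ ∏ i ∈ J, (ℓ : ℝ) / stepCount w i j := by
        refine prod_le_prod (fun i _ => by positivity) (fun i _ => ?_)
        gcongr
        exact hsucc_le i
    _ = ∏ t ∈ J.image (stepCount w · j), (ℓ : ℝ) / t :=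
        (prod_image (f := fun t : ℕ => (ℓ : ℝ) / t) fun a ha b hb =>
          stepCount_injOn (hJ a ha).1 (hJ b hb).1).symm
    _ ≤ ∏ t ∈ Icc 1 ⌊lam * ℓ⌋₊, (ℓ : ℝ) / t := by
        refine prod_le_prod_of_subset_of_one_le himage (fun _ _ => by positivity) fun t ht _ => ?_
        obtain ⟨ht1, htm⟩ := mem_Icc.mp ht
        rw [one_le_div (by exact_mod_cast ht1)]
        exact (Nat.cast_le.mpr htm).trans ((Nat.floor_le (by positivity)).trans hlamL)
    _ ≤ (Real.exp 1 / lam) ^ (lam * ℓ) := prod_Icc_div_le_rpow (Nat.cast_nonneg ℓ) hlam hlam1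

/-- Bounded increments in a step record: with `J_j = {i : w_i = j ∧ W_i(j)/i ≤ λ}`,
`∏_j ∏_{i ∈ J_j} (i / W_i(j)) ≤ (e/λ)^{2kλℓ}`. -/
theorem stmt_8 {k ℓ : ℕ} (w : Fin ℓ → Fin k) (lam : ℝ)
    (hlam : 0 < lam) (hlam' : lam < 1 / 3)
    (W : Fin ℓ → Fin k → ℕ)
    (hW : ∀ i j, W i j = (Finset.univ.filter fun u : Fin ℓ => u ≤ i ∧ w u = j).card) :
    ∏ j : Fin k, ∏ i ∈ Finset.univ.filter
        (fun i : Fin ℓ => w i = j ∧ (W i j : ℝ) ≤ lam * ((i : ℕ) + 1)),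
      ((((i : ℕ) : ℝ) + 1) / (W i j : ℝ)) ≤
      (Real.exp 1 / lam) ^ (2 * (k : ℝ) * lam * (ℓ : ℝ)) := by
  obtain rfl : W = stepCount w := funext₂ hW
  have hlam1 : lam ≤ 1 := by linarith
  have hbase : 1 ≤ Real.exp 1 / lam := by
    rw [le_div_iff₀ hlam]
    linarith [Real.add_one_le_exp (1 : ℝ)]
  calc _ ≤ ∏ _j : Fin k, (Real.exp 1 / lam) ^ (lam * ℓ) :=
        prod_le_prod (fun _ _ => prod_nonneg fun _ _ => by positivity)
          fun j _ => prod_filter_div_stepCount_le w j hlam hlam1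
    _ = (Real.exp 1 / lam) ^ ((k : ℝ) * lam * ℓ) := by
        rw [prod_const, card_univ, Fintype.card_fin, ← Real.rpow_mul_natCast (by positivity)]
        ring_nf
    _ ≤ (Real.exp 1 / lam) ^ (2 * (k : ℝ) * lam * ℓ) :=
        Real.rpow_le_rpow_of_exponent_le hbase (by
          have : 0 ≤ (k : ℝ) * lam * ℓ := by positivity
          linarith)
end

section
/- There exists θ = θ(ξ) > 0 such that for every unit vector x ∈ ℝⁿ, sup_{z∈ℝ} P[|b₁x₁+⋯+b_nx_n − z| ≤ θ] ≤ ‖p‖_∞, where b₁,…,b_n are i.i.d. copies of a discrete random variable ξ with maximal atom probability ‖p‖_∞. -/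
/-!
Write `S = ∑ bᵢ xᵢ` and fix two atoms `a₀ ≠ a₁`. If some coordinate is large, `c < |xⱼ|`, then
conditionally on the `bᵢ` with `i ≠ j`, a window of length `2θ` contains at most one of the points
`a_l xⱼ + r`, so its probability is at most `‖p‖_∞`.

Otherwise every `|xᵢ|` is at most `c`. Integrating against the Fejér kernel gives the Esseen-type
bound `P(|S - z| ≤ θ) ≤ π² / (2T) · ∫₀ᵀ |φ_S(t)| dt` for `θ ≤ π / T`. The characteristic function
factorises as `φ_S(t) = ∏ φ_ξ(t xᵢ)`, and `|φ_ξ(s)| ≤ exp (-γ s²)` with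
`γ = p₀ p₁ (a₀ - a₁)² / π²` as long as `|s (a₀ - a₁)| ≤ π`, which holds for `t ≤ T` when `c` is
small. Since `∑ xᵢ² = 1`, this gives `|φ_S(t)| ≤ exp (-γ t²)`, and the Gaussian integral bounds
the probability by `π² √(π / γ) / (4T)`, which equals `‖p‖_∞` for a suitable `T`.
-/

open MeasureTheory ProbabilityTheory Finset Real

noncomputable def fejerKernel (T y : ℝ) : ℝ := ∫ t in (0 : ℝ)..T, (1 - t / T) * cos (t * y)

lemma fejerKernel_zero_right (T : ℝ) : fejerKernel T 0 = T / 2 := by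
  rcases eq_or_ne T 0 with rfl | hT
  · simp [fejerKernel]
  simp only [fejerKernel, mul_zero, cos_zero, mul_one]
  rw [intervalIntegral.integral_sub intervalIntegrable_const
    (Continuous.intervalIntegrable (by fun_prop) 0 T), intervalIntegral.integral_div]
  simp only [intervalIntegral.integral_const, integral_id]
  field_simp
  ring

lemma fejerKernel_of_ne_zero {T y : ℝ} (hT : T ≠ 0) (hy : y ≠ 0) :
    fejerKernel T y = (1 - cos (T * y)) / (T * y ^ 2) := by
  have hderiv : ∀ t ∈ Set.uIcc (0 : ℝ) T, HasDerivAt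
      (fun t => (1 - t / T) * (sin (t * y) / y) - cos (t * y) / (T * y ^ 2))
      ((1 - t / T) * cos (t * y)) t := by
    intro t _
    have h1 := ((hasDerivAt_id t).div_const T).const_sub 1
    have h2 := (hasDerivAt_mul_const y (x := t)).sin.div_const y
    have h3 := (hasDerivAt_mul_const y (x := t)).cos.div_const (T * y ^ 2)
    refine ((h1.mul h2).sub h3).congr_deriv ?_
    simp only [id]
    field_simp
    ring
  rw [fejerKernel, intervalIntegral.integral_eq_sub_of_hasDerivAt hderiv
    ((by fun_prop : Continuous fun t => (1 - t / T) * cos (t * y)).intervalIntegrable 0 T)]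
  field_simp
  simp only [sub_self, mul_zero, zero_mul, zero_sub, sub_zero, sin_zero, cos_zero, sub_neg_eq_add]
  ring

lemma fejerKernel_nonneg {T : ℝ} (hT : 0 ≤ T) (y : ℝ) : 0 ≤ fejerKernel T y := by
  rcases hT.eq_or_lt with rfl | hT
  · simp [fejerKernel]
  rcases eq_or_ne y 0 with rfl | hy
  · rw [fejerKernel_zero_right]; positivity
  rw [fejerKernel_of_ne_zero hT.ne' hy]
  exact div_nonneg (sub_nonneg.2 (cos_le_one _)) (by positivity)

lemma two_mul_div_pi_sq_le_fejerKernel {T y : ℝ} (hT : 0 < T) (hy : |y| ≤ π / T) :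
    2 * T / π ^ 2 ≤ fejerKernel T y := by
  rcases eq_or_ne y 0 with rfl | hy0
  · rw [fejerKernel_zero_right, div_le_div_iff₀ (by positivity) two_pos]
    have : 4 < π ^ 2 := by nlinarith [pi_gt_three]
    nlinarith
  have hTy : |T * y| ≤ π := by
    rw [abs_mul, abs_of_pos hT]
    exact (le_div_iff₀' hT).1 hy
  rw [fejerKernel_of_ne_zero hT.ne' hy0, le_div_iff₀ (by positivity)]
  have := cos_le_one_sub_mul_cos_sq hTy
  have : 2 * T / π ^ 2 * (T * y ^ 2) = 2 / π ^ 2 * (T * y) ^ 2 := by ring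
  linarith

lemma integral_exp_neg_mul_sq_le {b : ℝ} (hb : 0 < b) {T : ℝ} (hT : 0 ≤ T) :
    ∫ t in (0 : ℝ)..T, exp (-b * t ^ 2) ≤ √(π / b) / 2 := by
  rw [intervalIntegral.integral_of_le hT, ← integral_gaussian_Ioi]
  exact setIntegral_mono_set (integrable_exp_neg_mul_sq hb).integrableOn
    (.of_forall fun t => (exp_pos _).le) Set.Ioc_subset_Ioi_self.eventuallyLE

-- The characteristic function of the discrete measure `∑ f, w f • δ (s f)`.
noncomputable def discreteCharFun {β : Type*} [Fintype β] (w s : β → ℝ) (t : ℝ) : ℂ :=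
  ∑ f, (w f : ℂ) * Complex.exp ((t * s f : ℝ) * Complex.I)

section
variable {β : Type*} [Fintype β]

lemma sum_mul_cos_le_norm_discreteCharFun (w s : β → ℝ) (t z : ℝ) :
    ∑ f, w f * cos (t * (s f - z)) ≤ ‖discreteCharFun w s t‖ := by
  have hre : ∑ f, w f * cos (t * (s f - z)) =
      (Complex.exp ((-(t * z) : ℝ) * Complex.I) * discreteCharFun w s t).re := by
    rw [discreteCharFun, mul_sum, Complex.re_sum]
    refine sum_congr rfl fun f _ => ?_
    rw [mul_left_comm, ← Complex.exp_add, ← add_mul, ← Complex.ofReal_add, Complex.re_ofReal_mul,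
      Complex.exp_ofReal_mul_I_re]
    ring_nf
  rw [hre]
  refine (Complex.re_le_norm _).trans_eq ?_
  rw [norm_mul, Complex.norm_exp_ofReal_mul_I, one_mul]

lemma norm_sq_discreteCharFun (p a : β → ℝ) (s : ℝ) :
    ‖discreteCharFun p a s‖ ^ 2 = ∑ l, ∑ m, p l * p m * cos (s * a l - s * a m) := by
  simp_rw [cos_sub]
  rw [Complex.sq_norm, Complex.normSq_apply, discreteCharFun, Complex.re_sum, Complex.im_sum]
  simp only [Complex.re_ofReal_mul, Complex.im_ofReal_mul, Complex.exp_ofReal_mul_I_re,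
    Complex.exp_ofReal_mul_I_im, sum_mul_sum, ← sum_add_distrib]
  refine sum_congr rfl fun l _ => sum_congr rfl fun m _ => by ring

lemma norm_discreteCharFun_le_exp {p : β → ℝ} (hp : ∀ l, 0 ≤ p l) (hsum : ∑ l, p l = 1)
    (a : β → ℝ) {l m : β} (s : ℝ) (hs : |s * (a l - a m)| ≤ π) :
    ‖discreteCharFun p a s‖ ≤ exp (-(p l * p m * (a l - a m) ^ 2 / π ^ 2) * s ^ 2) := by
  have hdefect : p l * p m * (1 - cos (s * a l - s * a m)) ≤
      ∑ l, ∑ m, p l * p m * (1 - cos (s * a l - s * a m)) := by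
    have hnonneg : ∀ l m, 0 ≤ p l * p m * (1 - cos (s * a l - s * a m)) := fun l m =>
      mul_nonneg (mul_nonneg (hp l) (hp m)) (sub_nonneg.2 (cos_le_one _))
    exact (single_le_sum (fun m _ => hnonneg l m) (mem_univ m)).trans
      (single_le_sum (f := fun l => ∑ m, _) (fun l _ => sum_nonneg fun m _ => hnonneg l m)
        (mem_univ l))
  have hcos : cos (s * a l - s * a m) ≤ 1 - 2 / π ^ 2 * (s * (a l - a m)) ^ 2 := by
    rw [← mul_sub]; exact cos_le_one_sub_mul_cos_sq hs
  have hsq : ‖discreteCharFun p a s‖ ^ 2 ≤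
      exp (-(p l * p m * (a l - a m) ^ 2 / π ^ 2) * s ^ 2) ^ 2 := by
    have hone : ∑ l, ∑ m, p l * p m = 1 := by rw [← sum_mul_sum, hsum, one_mul]
    have : ∑ l, ∑ m, p l * p m * cos (s * a l - s * a m) =
        1 - ∑ l, ∑ m, p l * p m * (1 - cos (s * a l - s * a m)) := by
      simp only [mul_sub, mul_one, sum_sub_distrib, hone, sub_sub_cancel]
    rw [norm_sq_discreteCharFun, this, ← exp_nat_mul, Nat.cast_ofNat]
    have hexp := add_one_le_exp (2 * (-(p l * p m * (a l - a m) ^ 2 / π ^ 2) * s ^ 2))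
    have := mul_le_mul_of_nonneg_left hcos (mul_nonneg (hp l) (hp m))
    have : p l * p m * (2 / π ^ 2 * (s * (a l - a m)) ^ 2) =
      -(2 * (-(p l * p m * (a l - a m) ^ 2 / π ^ 2) * s ^ 2)) := by ring
    linarith
  exact (pow_le_pow_iff_left₀ (norm_nonneg _) (exp_pos _).le two_ne_zero).1 hsq

lemma sum_filter_le_sum_mul_fejerKernel {w : β → ℝ} (hw : ∀ f, 0 ≤ w f) (s : β → ℝ)
    {T θ : ℝ} (hT : 0 < T) (hθ : θ ≤ π / T) (z : ℝ) :
    ∑ f ∈ univ.filter (fun f => |s f - z| ≤ θ), w f ≤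
      π ^ 2 / (2 * T) * ∑ f, w f * fejerKernel T (s f - z) := by
  rw [mul_sum, sum_filter]
  refine sum_le_sum fun f _ => ?_
  split_ifs with hf
  · have hK := two_mul_div_pi_sq_le_fejerKernel hT (hf.trans hθ)
    have : 1 ≤ π ^ 2 / (2 * T) * fejerKernel T (s f - z) := by
      rw [div_mul_eq_mul_div, le_div_iff₀ (by positivity)]
      rw [div_le_iff₀ (by positivity)] at hK
      linarith
    rw [mul_left_comm]
    exact le_mul_of_one_le_right (hw f) this
  · exact mul_nonneg (by positivity) (mul_nonneg (hw f) (fejerKernel_nonneg hT.le _))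

lemma sum_mul_fejerKernel_le_integral_norm_discreteCharFun (w s : β → ℝ) {T : ℝ} (hT : 0 ≤ T)
    (z : ℝ) :
    ∑ f, w f * fejerKernel T (s f - z) ≤ ∫ t in (0 : ℝ)..T, ‖discreteCharFun w s t‖ := by
  have hsum : ∑ f, w f * fejerKernel T (s f - z) =
      ∫ t in (0 : ℝ)..T, (1 - t / T) * ∑ f, w f * cos (t * (s f - z)) := by
    simp only [fejerKernel, mul_sum, ← intervalIntegral.integral_const_mul]
    rw [intervalIntegral.integral_finsetSum fun f _ => Continuous.intervalIntegrable
      (by fun_prop) 0 T]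
    exact sum_congr rfl fun f _ => intervalIntegral.integral_congr fun t _ => by ring
  rw [hsum]
  refine intervalIntegral.integral_mono_on hT (Continuous.intervalIntegrable (by fun_prop) 0 T)
    (Continuous.intervalIntegrable (by unfold discreteCharFun; fun_prop) 0 T) fun t ht => ?_
  have h1 : 0 ≤ 1 - t / T := sub_nonneg.2 (div_le_one_of_le₀ ht.2 hT)
  have h2 : 1 - t / T ≤ 1 := sub_le_self _ (div_nonneg ht.1 hT)
  calc (1 - t / T) * ∑ f, w f * cos (t * (s f - z))
      ≤ (1 - t / T) * ‖discreteCharFun w s t‖ :=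
        mul_le_mul_of_nonneg_left (sum_mul_cos_le_norm_discreteCharFun w s t z) h1
    _ ≤ ‖discreteCharFun w s t‖ := mul_le_of_le_one_left (norm_nonneg _) h2

lemma sum_filter_le_integral_norm_discreteCharFun {w : β → ℝ} (hw : ∀ f, 0 ≤ w f) (s : β → ℝ)
    {T θ : ℝ} (hT : 0 < T) (hθ : θ ≤ π / T) (z : ℝ) :
    ∑ f ∈ univ.filter (fun f => |s f - z| ≤ θ), w f ≤
      π ^ 2 / (2 * T) * ∫ t in (0 : ℝ)..T, ‖discreteCharFun w s t‖ :=
  (sum_filter_le_sum_mul_fejerKernel hw s hT hθ z).trans <| mul_le_mul_of_nonneg_left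
    (sum_mul_fejerKernel_le_integral_norm_discreteCharFun w s hT.le z) (by positivity)

end

lemma exists_pos_le_abs_sub_of_injective {α : Type*} [Finite α] {a : α → ℝ}
    (ha : Function.Injective a) :
    ∃ δ > 0, ∀ l m, l ≠ m → δ ≤ |a l - a m| := by
  suffices ∀ᶠ δ in nhdsWithin (0 : ℝ) (Set.Ioi 0), 0 < δ ∧ ∀ l m, l ≠ m → δ ≤ |a l - a m| from
    this.exists
  refine eventually_mem_nhdsWithin.and (Filter.eventually_all.2 fun l => Filter.eventually_all.2
    fun m => ?_)
  by_cases hlm : l = m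
  · exact .of_forall fun _ h => (h hlm).elim
  · exact Filter.Eventually.filter_mono nhdsWithin_le_nhds <|
      (eventually_le_nhds (abs_pos.2 (sub_ne_zero.2 (ha.ne hlm)))).mono fun _ h _ => h

section
variable {ι α : Type*} [Fintype ι] [DecidableEq ι] [Fintype α]

lemma discreteCharFun_pi (p a : α → ℝ) (x : ι → ℝ) (t : ℝ) :
    discreteCharFun (fun f : ι → α => ∏ i, p (f i)) (fun f => ∑ i, a (f i) * x i) t =
      ∏ i, discreteCharFun p a (t * x i) := by
  simp only [discreteCharFun, prod_univ_sum, Fintype.piFinset_univ, prod_mul_distrib,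
    Complex.ofReal_prod, ← Complex.exp_sum, ← sum_mul, ← Complex.ofReal_sum, mul_sum]
  refine sum_congr rfl fun f _ => ?_
  congr 4
  exact sum_congr rfl fun i _ => by ring

lemma integral_norm_discreteCharFun_pi_le {p : α → ℝ} (hp : ∀ l, 0 ≤ p l) (hsum : ∑ l, p l = 1)
    (a : α → ℝ) {l m : α} (hγ : 0 < p l * p m * (a l - a m) ^ 2 / π ^ 2) {x : ι → ℝ}
    (hx : ∑ i, x i ^ 2 = 1) {T : ℝ} (hT : 0 ≤ T) (hxT : ∀ i, T * |x i| * |a l - a m| ≤ π) :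
    ∫ t in (0 : ℝ)..T, ‖discreteCharFun (fun f : ι → α => ∏ i, p (f i))
        (fun f => ∑ i, a (f i) * x i) t‖ ≤
      √(π / (p l * p m * (a l - a m) ^ 2 / π ^ 2)) / 2 := by
  set γ := p l * p m * (a l - a m) ^ 2 / π ^ 2
  refine le_trans (intervalIntegral.integral_mono_on hT
    (Continuous.intervalIntegrable (by unfold discreteCharFun; fun_prop) 0 T)
    (Continuous.intervalIntegrable (by fun_prop) 0 T) fun t ht => ?_)
    (integral_exp_neg_mul_sq_le hγ hT)
  have hfactor : ∀ i, ‖discreteCharFun p a (t * x i)‖ ≤ exp (-γ * (t * x i) ^ 2) := by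
    refine fun i => norm_discreteCharFun_le_exp hp hsum a _ ?_
    rw [abs_mul, abs_mul, abs_of_nonneg ht.1]
    exact le_trans (by gcongr; exact ht.2) (hxT i)
  calc ‖discreteCharFun (fun f : ι → α => ∏ i, p (f i)) (fun f => ∑ i, a (f i) * x i) t‖
      = ∏ i, ‖discreteCharFun p a (t * x i)‖ := by rw [discreteCharFun_pi, norm_prod]
    _ ≤ ∏ i, exp (-γ * (t * x i) ^ 2) :=
        prod_le_prod (fun i _ => norm_nonneg _) fun i _ => hfactor i
    _ = exp (-γ * t ^ 2) := by
        rw [← exp_sum]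
        simp_rw [mul_pow, ← mul_assoc, ← mul_sum, hx, mul_one]

-- The left side is the probability of `P` under the product measure `⨂ᵢ p`; `hq` bounds its
-- conditional probabilities given the coordinates other than `j`.
lemma sum_filter_prod_le_of_forall_update {p : α → ℝ}
    (hp : ∀ l, 0 ≤ p l) (hsum : ∑ l, p l = 1) (P : (ι → α) → Prop) [DecidablePred P] (j : ι)
    {q : ℝ} (hq : ∀ f, ∑ l ∈ univ.filter (fun l => P (Function.update f j l)), p l ≤ q) :
    ∑ f ∈ univ.filter P, ∏ i, p (f i) ≤ q := by
  set e := Equiv.funSplitAt j α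
  have hupdate : ∀ l l' g, Function.update (e.symm (l', g)) j l = e.symm (l, g) := by
    intro l l' g
    ext i
    by_cases hi : i = j
    · subst hi; simp [e]
    · simp [e, hi]
  have hprod : ∀ l g, ∏ i, p (e.symm (l, g) i) = p l * ∏ i, p (g i) := by
    intro l g
    rw [← (Equiv.optionSubtypeNe j).prod_comp, Fintype.prod_option]
    simp only [e, Equiv.funSplitAt_symm_apply, Equiv.optionSubtypeNe_none,
      Equiv.optionSubtypeNe_some, dif_pos, Subtype.coe_eta]
    congr 1
    exact prod_congr rfl fun i _ => by rw [dif_neg i.2]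
  obtain ⟨l₀⟩ : Nonempty α := by
    by_contra h
    simp [not_nonempty_iff.1 h] at hsum
  have hW : ∑ g : {i // i ≠ j} → α, ∏ i, p (g i) = 1 := by
    rw [← Fintype.prod_sum, hsum, prod_const_one]
  calc ∑ f ∈ univ.filter P, ∏ i, p (f i)
      = ∑ g : {i // i ≠ j} → α, (∏ i, p (g i)) *
          ∑ l ∈ univ.filter (fun l => P (Function.update (e.symm (l₀, g)) j l)), p l := by
        rw [sum_filter, ← e.symm.sum_comp, Fintype.sum_prod_type, sum_comm]
        refine sum_congr rfl fun g _ => ?_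
        simp only [sum_filter, mul_sum, hupdate, hprod]
        exact sum_congr rfl fun l _ => by split_ifs <;> ring
    _ ≤ ∑ g : {i // i ≠ j} → α, (∏ i, p (g i)) * q :=
        sum_le_sum fun g _ => mul_le_mul_of_nonneg_left (hq _) (prod_nonneg fun i _ => hp _)
    _ = q := by rw [← sum_mul, hW, one_mul]

end

section
variable {α : Type*} [Fintype α]

lemma card_filter_abs_mul_add_le_one (a : α → ℝ) {y θ : ℝ}
    (hsep : ∀ l m, l ≠ m → 2 * θ < |a l - a m| * |y|) (r : ℝ) :
    (univ.filter fun l => |a l * y + r| ≤ θ).card ≤ 1 := by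
  refine card_le_one.2 fun l hl m hm => ?_
  by_contra hlm
  simp only [mem_filter, mem_univ, true_and] at hl hm
  have : |a l - a m| * |y| ≤ 2 * θ := by
    rw [← abs_mul, show (a l - a m) * y = (a l * y + r) - (a m * y + r) by ring]
    exact (abs_sub _ _).trans (by linarith)
  exact (hsep l m hlm).not_ge this

variable {ι : Type*} [Fintype ι] [DecidableEq ι]

lemma sum_filter_prod_le_of_separated {p : α → ℝ} (hp : ∀ l, 0 ≤ p l) (hsum : ∑ l, p l = 1)
    {pmax : ℝ} (hpmax : ∀ l, p l ≤ pmax) (a : α → ℝ) {θ : ℝ} (x : ι → ℝ) (j : ι)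
    (hsep : ∀ l m, l ≠ m → 2 * θ < |a l - a m| * |x j|) (z : ℝ) :
    ∑ f ∈ univ.filter (fun f : ι → α => |∑ i, a (f i) * x i - z| ≤ θ), ∏ i, p (f i) ≤ pmax := by
  refine sum_filter_prod_le_of_forall_update hp hsum _ j fun f => ?_
  obtain ⟨l₀⟩ : Nonempty α := by
    by_contra h
    simp [not_nonempty_iff.1 h] at hsum
  have hupdate : ∀ l, ∑ i, a (Function.update f j l i) * x i - z =
      a l * x j + (∑ i ∈ univ.erase j, a (f i) * x i - z) := fun l => by
    rw [← add_sum_erase _ _ (mem_univ j), Function.update_self,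
      sum_congr rfl fun i hi => by rw [Function.update_of_ne (ne_of_mem_erase hi)]]
    ring
  simp_rw [hupdate]
  calc _ ≤ (univ.filter fun l => |a l * x j + (∑ i ∈ univ.erase j, a (f i) * x i - z)| ≤ θ).card
        • pmax := sum_le_card_nsmul _ _ _ fun l _ => hpmax l
    _ ≤ 1 • pmax := nsmul_le_nsmul_left ((hp l₀).trans (hpmax l₀))
        (card_filter_abs_mul_add_le_one a hsep _)
    _ = pmax := one_nsmul _

end

lemma measure_le_sum_filter_prod {Ω ι α : Type*} [MeasurableSpace Ω] {μ : Measure Ω}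
    [IsProbabilityMeasure μ] [Fintype ι] [DecidableEq ι] [Fintype α] {a p : α → ℝ}
    (hp : ∀ l, 0 ≤ p l) {b : ι → Ω → ℝ} (hb : ∀ i, Measurable (b i)) (hind : iIndepFun b μ)
    (hatom : ∀ i l, μ {ω | b i ω = a l} = ENNReal.ofReal (p l))
    (hrange : ∀ i, μ {ω | b i ω ∈ Set.range a} = 1) (P : (ι → ℝ) → Prop) [DecidablePred P] :
    μ {ω | P fun i => b i ω} ≤
      ENNReal.ofReal (∑ f ∈ univ.filter (fun f : ι → α => P (a ∘ f)), ∏ i, p (f i)) := by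
  have hae : ∀ᵐ ω ∂μ, ∀ i, b i ω ∈ Set.range a := ae_all_iff.2 fun i =>
    (ae_iff_measure_eq ((hb i) (Set.finite_range a).measurableSet).nullMeasurableSet).2
      ((hrange i).trans measure_univ.symm)
  have hcover : {ω | P fun i => b i ω} ≤ᵐ[μ]
      ⋃ f ∈ univ.filter (fun f : ι → α => P (a ∘ f)), ⋂ i, b i ⁻¹' {a (f i)} := by
    filter_upwards [hae] with ω hω hP
    choose f hf using hω
    refine Set.mem_iUnion₂.2
      ⟨f, mem_filter.2 ⟨mem_univ _, ?_⟩, Set.mem_iInter.2 fun i => (hf i).symm⟩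
    rwa [show a ∘ f = fun i => b i ω from funext hf]
  have hcell : ∀ f : ι → α, μ (⋂ i, b i ⁻¹' {a (f i)}) = ENNReal.ofReal (∏ i, p (f i)) := by
    intro f
    rw [hind.meas_iInter fun i => ⟨_, measurableSet_singleton _, rfl⟩,
      ENNReal.ofReal_prod_of_nonneg fun i _ => hp _]
    exact prod_congr rfl fun i _ => hatom i (f i)
  calc μ {ω | P fun i => b i ω}
      ≤ μ (⋃ f ∈ univ.filter (fun f : ι → α => P (a ∘ f)), ⋂ i, b i ⁻¹' {a (f i)}) :=
        measure_mono_ae hcover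
    _ ≤ ∑ f ∈ univ.filter (fun f : ι → α => P (a ∘ f)), μ (⋂ i, b i ⁻¹' {a (f i)}) :=
        measure_biUnion_finset_le _ _
    _ = ENNReal.ofReal (∑ f ∈ univ.filter (fun f : ι → α => P (a ∘ f)), ∏ i, p (f i)) := by
        rw [ENNReal.ofReal_sum_of_nonneg fun f _ => prod_nonneg fun i _ => hp _]
        exact sum_congr rfl fun f _ => hcell f

theorem exists_pos_sum_filter_prod_le {k : ℕ} (hk : 2 ≤ k) {a : Fin k → ℝ}
    (ha : Function.Injective a) {p : Fin k → ℝ} (hp : ∀ l, 0 < p l) (hsum : ∑ l, p l = 1)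
    {pmax : ℝ} (hpmax : ∀ l, p l ≤ pmax) :
    ∃ θ > 0, ∀ (n : ℕ) (x : Fin n → ℝ), ∑ i, x i ^ 2 = 1 → ∀ z : ℝ,
      ∑ f ∈ univ.filter (fun f : Fin n → Fin k => |∑ i, a (f i) * x i - z| ≤ θ),
        ∏ i, p (f i) ≤ pmax := by
  set l₀ : Fin k := ⟨0, by omega⟩
  set l₁ : Fin k := ⟨1, by omega⟩
  have hD : a l₀ - a l₁ ≠ 0 := sub_ne_zero.2 (ha.ne (by simp [l₀, l₁, Fin.ext_iff]))
  set γ := p l₀ * p l₁ * (a l₀ - a l₁) ^ 2 / π ^ 2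
  have hγ : 0 < γ :=
    div_pos (mul_pos (mul_pos (hp l₀) (hp l₁)) (sq_pos_of_ne_zero hD)) (by positivity)
  have hpmax₀ : 0 < pmax := (hp l₀).trans_le (hpmax l₀)
  set T := π ^ 2 * √(π / γ) / (4 * pmax)
  have hT : 0 < T := by positivity
  set c := π / (T * |a l₀ - a l₁|)
  obtain ⟨δ, hδ, hsep⟩ := exists_pos_le_abs_sub_of_injective ha
  refine ⟨min (π / T) (δ * c / 2), by positivity, fun n x hx z => ?_⟩
  by_cases hlarge : ∃ j, c < |x j|
  · obtain ⟨j, hj⟩ := hlarge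
    refine sum_filter_prod_le_of_separated (fun l => (hp l).le) hsum hpmax a x j
      (fun l m hlm => ?_) z
    calc 2 * min (π / T) (δ * c / 2) ≤ δ * c := by linarith [min_le_right (π / T) (δ * c / 2)]
      _ < δ * |x j| := mul_lt_mul_of_pos_left hj hδ
      _ ≤ |a l - a m| * |x j| := mul_le_mul_of_nonneg_right (hsep l m hlm) (abs_nonneg _)
  · push Not at hlarge
    have hxT : ∀ i, T * |x i| * |a l₀ - a l₁| ≤ π := fun i => by
      calc T * |x i| * |a l₀ - a l₁| ≤ T * c * |a l₀ - a l₁| := by gcongr; exact hlarge i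
        _ = π := by simp only [c]; field_simp
    calc _ ≤ π ^ 2 / (2 * T) * ∫ t in (0 : ℝ)..T, ‖discreteCharFun
            (fun f : Fin n → Fin k => ∏ i, p (f i)) (fun f => ∑ i, a (f i) * x i) t‖ :=
          sum_filter_le_integral_norm_discreteCharFun (fun f => prod_nonneg fun i _ => (hp _).le)
            _ hT (min_le_left _ _) z
      _ ≤ π ^ 2 / (2 * T) * (√(π / γ) / 2) := by
          gcongr
          exact integral_norm_discreteCharFun_pi_le (fun l => (hp l).le) hsum a hγ hx hT.le hxT
      _ = pmax := by
          have : √(π / γ) ≠ 0 := by positivity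
          simp only [T]
          field_simp
          norm_num

theorem stmt_10_general {k : ℕ} (hk : 2 ≤ k) (a : Fin k → ℝ) (ha : Function.Injective a)
    (p : Fin k → ℝ) (hp : ∀ i, 0 < p i) (hsum : ∑ i, p i = 1)
    (pmax : ℝ) (hpmax : ∀ i, p i ≤ pmax) :
    ∃ θ : ℝ, 0 < θ ∧
      ∀ (n : ℕ) (Ω : Type) (_ : MeasurableSpace Ω) (μ : Measure Ω),
        IsProbabilityMeasure μ →
        ∀ b : Fin n → Ω → ℝ, (∀ i, Measurable (b i)) →
        iIndepFun b μ →
        (∀ i l, μ {ω | b i ω = a l} = ENNReal.ofReal (p l)) →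
        (∀ i, μ {ω | b i ω ∈ Set.range a} = 1) →
        ∀ x : Fin n → ℝ, (∑ i, (x i) ^ 2 = 1) →
        ∀ z : ℝ, μ {ω | |(∑ i, b i ω * x i) - z| ≤ θ} ≤ ENNReal.ofReal pmax := by
  obtain ⟨θ, hθ, hmass⟩ := exists_pos_sum_filter_prod_le hk ha hp hsum hpmax
  refine ⟨θ, hθ, fun n Ω _ μ _ b hb hind hatom hrange x hx z => ?_⟩
  exact (measure_le_sum_filter_prod (fun l => (hp l).le) hb hind hatom hrange
    fun y => |∑ i, y i * x i - z| ≤ θ).trans (ENNReal.ofReal_le_ofReal (hmass n x hx z))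

/-- There is `θ = θ(ξ) > 0` such that for every unit vector `x`, the Lévy concentration
of `∑ bᵢxᵢ` at scale `θ` is at most `‖p‖_∞`, for `bᵢ` i.i.d. copies of `ξ`. -/
theorem stmt_10 {k : ℕ} (hk : 2 ≤ k) (a : Fin k → ℝ) (ha : Function.Injective a)
    (p : Fin k → ℝ) (hp : ∀ i, 0 < p i) (hsum : ∑ i, p i = 1)
    (pmax : ℝ) (hpmax : ∀ i, p i ≤ pmax) (hpmax' : ∃ i, p i = pmax) :
    ∃ θ : ℝ, 0 < θ ∧
      ∀ (n : ℕ) (Ω : Type) (_ : MeasurableSpace Ω) (μ : Measure Ω),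
        IsProbabilityMeasure μ →
        ∀ b : Fin n → Ω → ℝ, (∀ i, Measurable (b i)) →
        iIndepFun b μ →
        (∀ i l, μ {ω | b i ω = a l} = ENNReal.ofReal (p l)) →
        (∀ i, μ {ω | b i ω ∈ Set.range a} = 1) →
        ∀ x : Fin n → ℝ, (∑ i, (x i) ^ 2 = 1) →
        ∀ z : ℝ, μ {ω | |(∑ i, b i ω * x i) - z| ≤ θ} ≤ ENNReal.ofReal pmax :=
  stmt_10_general hk a ha p hp hsum pmax hpmax
end

section
/- Randomized rounding preserving anticoncentration: let y ∈ ℝⁿ, μ > 0, λ ∈ ℝ, and let Δ be a probability distribution on [−s,s]ⁿ. Suppose P[|∑ b_i y_i − λ| ≤ t] ≤ μt for all t ≥ √n, where b ∼ Δ. Then there exist constants c, C > 0 depending only on s and an integer vector y' ∈ ℤⁿ such that (1) ‖y − y'‖_∞ ≤ 1; (2) P[|∑ b_i y'_i − λ| ≤ t] ≤ Cμt for all t ≥ √n; (3) sup_z P[|∑ b_i y'_i − z| ≤ √n] ≥ c · sup_z P[|∑ b_i y_i − z| ≤ √n]; (4) |∑ y_i − ∑ y'_i| ≤ C√n. -/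
/-!
Round `y` randomly and independently: `y'ᵢ = ⌊yᵢ⌋ + 1` with probability `θᵢ = fract yᵢ`, otherwise
`⌊yᵢ⌋`. For every fixed `b` in the cube the error `∑ bᵢ (y'ᵢ - yᵢ)` is a sum of independent
centred terms of variance at most `bᵢ² / 4`, so by Chebyshev it exceeds `u` with probability at
most `s² n / (4 u²)`; by Fubini the same bound holds on average for the `Δ`-mass of any set of `b`.
Three bad events then each have small probability (Markov's inequality):
* the error is large on the dyadic balls `|∑ bᵢyᵢ - λ| ≤ 2^(r+2) √n` (which carry mass
  `O(μ 2^r √n)`), where it could create new mass near `λ`;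
* the error exceeds `s √n` on a large part of an almost optimal ball `|∑ bᵢyᵢ - z| ≤ √n`;
* `|∑ (y'ᵢ - yᵢ)| ≥ 2 √n`.
A rounding outside all three satisfies (1)–(4).
-/

open MeasureTheory ProbabilityTheory Finset
open scoped ENNReal

theorem meas_lt_le_of_lintegral_le_mul {α : Type*} [MeasurableSpace α] {μ : Measure α}
    {f : α → ℝ≥0∞} (hf : AEMeasurable f μ) {a p : ℝ≥0∞} (h : ∫⁻ x, f x ∂μ ≤ a * p) :
    μ {x | a < f x} ≤ p := by
  rcases eq_or_ne a 0 with rfl | ha0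
  · have hf0 : f =ᵐ[μ] 0 := (lintegral_eq_zero_iff' hf).1 (by simpa using h)
    refine (measure_eq_zero_iff_ae_notMem.2 ?_).trans_le bot_le
    filter_upwards [hf0] with x hx
    simp [hx]
  rcases eq_or_ne a ⊤ with rfl | hatop
  · simp
  calc μ {x | a < f x} ≤ μ {x | a ≤ f x} := measure_mono fun x (hx : a < f x) ↦ hx.le
    _ ≤ p := (ENNReal.mul_le_mul_iff_right ha0 hatop).1 ((mul_meas_ge_le_lintegral₀ hf a).trans h)

theorem meas_ge_abs_sum_pi_le_sum_variance_div_sq {ι : Type*} [Fintype ι] {Ω : ι → Type*}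
    [∀ i, MeasurableSpace (Ω i)] {μ : ∀ i, Measure (Ω i)} [∀ i, IsProbabilityMeasure (μ i)]
    {X : ∀ i, Ω i → ℝ} (hX : ∀ i, MemLp (X i) 2 (μ i)) (hX0 : ∀ i, ∫ ω, X i ω ∂μ i = 0)
    {u : ℝ} (hu : 0 < u) :
    Measure.pi μ {ω | u ≤ |∑ i, X i (ω i)|} ≤
      ENNReal.ofReal ((∑ i, Var[X i; μ i]) / u ^ 2) := by
  have hXπ : ∀ i, MemLp (fun ω : ∀ i, Ω i ↦ X i (ω i)) 2 (Measure.pi μ) := fun i ↦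
    (hX i).comp_measurePreserving (measurePreserving_eval _ i)
  have hmean : ∫ ω, ∑ i, X i (ω i) ∂Measure.pi μ = 0 := by
    rw [integral_finsetSum _ fun i _ ↦ (hXπ i).integrable one_le_two]
    refine Finset.sum_eq_zero fun i _ ↦ ?_
    rw [integral_comp_eval (hX i).aestronglyMeasurable, hX0 i]
  have := meas_ge_le_variance_div_sq (memLp_finsetSum' univ fun i _ ↦ hXπ i) hu
  rw [variance_sum_pi hX] at this
  simpa [Finset.sum_apply, hmean] using this

theorem exists_two_pow_le_abs_of_abs_add_le {σ t x e : ℝ} (hσ : 0 < σ) (hσt : σ ≤ t)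
    (hxe : |x + e| ≤ t) (hx : 2 * t < |x|) :
    ∃ r : ℕ, |x| ≤ 2 ^ (r + 2) * σ ∧ 2 ^ r * σ ≤ |e| := by
  obtain ⟨r, hr, hr'⟩ := exists_nat_pow_near (x := |x| / (2 * σ)) (y := 2)
    ((one_le_div (by positivity)).2 (by linarith)) one_lt_two
  rw [le_div_iff₀ (by positivity)] at hr
  rw [div_lt_iff₀ (by positivity), pow_succ] at hr'
  refine ⟨r, by rw [show (2 : ℝ) ^ (r + 2) = 2 ^ r * 4 by ring]; linarith, ?_⟩
  have : |x| - |x + e| ≤ |e| := by simpa using abs_sub_abs_le_abs_sub x (x + e)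
  linarith

theorem measure_abs_add_sub_le_le_add_tsum {Ω : Type*} [MeasurableSpace Ω] (μ : Measure Ω)
    (S X : Ω → ℝ) (lam : ℝ) {σ t : ℝ} (hσ : 0 < σ) (hσt : σ ≤ t) :
    μ {b | |S b + X b - lam| ≤ t} ≤ μ {b | |S b - lam| ≤ 2 * t} +
      ∑' r : ℕ, μ ({b | |S b - lam| ≤ 2 ^ (r + 2) * σ} ∩ {b | 2 ^ r * σ ≤ |X b|}) := by
  have hcover : {b | |S b + X b - lam| ≤ t} ⊆ {b | |S b - lam| ≤ 2 * t} ∪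
      ⋃ r : ℕ, {b | |S b - lam| ≤ 2 ^ (r + 2) * σ} ∩ {b | 2 ^ r * σ ≤ |X b|} := by
    intro b hb
    by_cases hfar : |S b - lam| ≤ 2 * t
    · exact Or.inl hfar
    obtain ⟨r, hr⟩ := exists_two_pow_le_abs_of_abs_add_le hσ hσt
      (by rwa [sub_add_eq_add_sub]) (not_le.1 hfar)
    exact Or.inr (Set.mem_iUnion.2 ⟨r, hr⟩)
  exact (measure_mono hcover).trans
    ((measure_union_le _ _).trans (add_le_add_right (measure_iUnion_le _) _))

theorem measure_abs_add_sub_le_of_tsum_le {Ω : Type*} [MeasurableSpace Ω] (μ : Measure Ω)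
    (S X : Ω → ℝ) {lam σ μ₀ K t : ℝ} (hσ : 0 < σ) (hμ₀ : 0 ≤ μ₀) (hK : 0 ≤ K)
    (hyp : ∀ t, σ ≤ t → μ {b | |S b - lam| ≤ t} ≤ ENNReal.ofReal (μ₀ * t))
    (htail : ∑' r : ℕ, μ ({b | |S b - lam| ≤ 2 ^ (r + 2) * σ} ∩ {b | 2 ^ r * σ ≤ |X b|}) ≤
      ENNReal.ofReal (K * μ₀ * σ)) (ht : σ ≤ t) :
    μ {b | |S b + X b - lam| ≤ t} ≤ ENNReal.ofReal ((K + 2) * μ₀ * t) := by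
  have ht0 : 0 ≤ t := hσ.le.trans ht
  calc _ ≤ _ := measure_abs_add_sub_le_le_add_tsum μ S X lam hσ ht
    _ ≤ ENNReal.ofReal (μ₀ * (2 * t)) + ENNReal.ofReal (K * μ₀ * σ) :=
        add_le_add (hyp _ (by linarith)) htail
    _ ≤ ENNReal.ofReal ((K + 2) * μ₀ * t) := by
        rw [← ENNReal.ofReal_add (by positivity) (by positivity)]
        apply ENNReal.ofReal_le_ofReal
        nlinarith [mul_le_mul_of_nonneg_left ht (by positivity : 0 ≤ K * μ₀)]

theorem ENNReal.ofReal_one_div_mul_le {a : ℝ} (ha : 0 < a) {x y : ℝ≥0∞}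
    (h : x ≤ ENNReal.ofReal a * y) : ENNReal.ofReal (1 / a) * x ≤ y :=
  calc ENNReal.ofReal (1 / a) * x ≤ ENNReal.ofReal (1 / a) * (ENNReal.ofReal a * y) := by gcongr
    _ = y := by
      rw [← mul_assoc, ← ENNReal.ofReal_mul (by positivity), one_div_mul_cancel ha.ne',
        ENNReal.ofReal_one, one_mul]

noncomputable def levyConcentration {Ω : Type*} [MeasurableSpace Ω] (μ : Measure Ω)
    (f : Ω → ℝ) (r : ℝ) : ℝ≥0∞ :=
  ⨆ z : ℝ, μ {x | |f x - z| ≤ r}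

section LevyConcentration

variable {Ω : Type*} [MeasurableSpace Ω] (μ : Measure Ω) (f : Ω → ℝ)

theorem measure_preimage_Ioo_le_levyConcentration (r : ℝ) (m : ℕ) (a : ℝ) :
    μ (f ⁻¹' Set.Ioo a (a + 2 * m * r)) ≤ m * levyConcentration μ f r := by
  induction m generalizing a with
  | zero => simp
  | succ m ih =>
    have hcover : f ⁻¹' Set.Ioo a (a + 2 * ↑(m + 1) * r) ⊆
        {x | |f x - (a + r)| ≤ r} ∪ f ⁻¹' Set.Ioo (a + 2 * r) (a + 2 * r + 2 * m * r) := by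
      intro x ⟨hax, hxb⟩
      by_cases hx : f x ≤ a + 2 * r
      · left; rw [Set.mem_ofPred_eq, abs_le]; constructor <;> linarith
      · right; push_cast at hxb; constructor <;> linarith
    calc μ (f ⁻¹' Set.Ioo a (a + 2 * ↑(m + 1) * r))
        ≤ μ {x | |f x - (a + r)| ≤ r} + μ (f ⁻¹' Set.Ioo (a + 2 * r) (a + 2 * r + 2 * m * r)) :=
          (measure_mono hcover).trans (measure_union_le _ _)
      _ ≤ levyConcentration μ f r + m * levyConcentration μ f r :=
          add_le_add (le_iSup (fun z ↦ μ {x | |f x - z| ≤ r}) (a + r)) (ih _)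
      _ = ↑(m + 1) * levyConcentration μ f r := by push_cast; ring

theorem measure_abs_sub_lt_le_levyConcentration (r : ℝ) (m : ℕ) (z : ℝ) :
    μ {x | |f x - z| < m * r} ≤ m * levyConcentration μ f r := by
  convert measure_preimage_Ioo_le_levyConcentration μ f r m (z - m * r) using 3
  ext x
  simp only [Set.mem_ofPred_eq, Set.mem_preimage, Set.mem_Ioo, abs_lt]
  constructor <;> rintro ⟨h1, h2⟩ <;> constructor <;> linarith

variable [IsFiniteMeasure μ]

theorem exists_levyConcentration_le_two_mul (r : ℝ) :
    ∃ z, levyConcentration μ f r ≤ 2 * μ {x | |f x - z| ≤ r} := by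
  rcases eq_or_ne (levyConcentration μ f r) 0 with h | h
  · exact ⟨0, by simp [h]⟩
  have hfin : levyConcentration μ f r ≠ ⊤ :=
    (iSup_le fun z ↦ measure_mono (Set.subset_univ _)).trans_lt (measure_lt_top μ _) |>.ne
  obtain ⟨z, hz⟩ := lt_iSup_iff.1 (ENNReal.half_lt_self h hfin)
  exact ⟨z, by rw [ENNReal.div_lt_iff (by simp) (by simp)] at hz; rw [mul_comm]; exact hz.le⟩

theorem levyConcentration_le_mul_of_measure_inter_le (X : Ω → ℝ) {s σ z : ℝ} (hσ : 0 ≤ σ)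
    {m : ℕ} (hm : s + 1 ≤ m) (hz : levyConcentration μ f σ ≤ 2 * μ {b | |f b - z| ≤ σ})
    (hX : μ ({b | |f b - z| ≤ σ} ∩ {b | s * σ ≤ |X b|}) ≤ μ {b | |f b - z| ≤ σ} / 2) :
    levyConcentration μ f σ ≤
      ENNReal.ofReal (4 * m) * levyConcentration μ (fun b ↦ f b + X b) σ := by
  set A := {b | |f b - z| ≤ σ}
  have hcore : A \ {b | s * σ ≤ |X b|} ⊆ {b | |f b + X b - z| < m * σ} := by
    rintro b ⟨hfb, hXb⟩
    replace hfb : |f b - z| ≤ σ := hfb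
    simp only [Set.mem_ofPred_eq, not_le] at hXb ⊢
    calc |f b + X b - z| ≤ |f b - z| + |X b| := by
          rw [add_sub_right_comm]; exact abs_add_le _ _
      _ < σ + s * σ := by linarith
      _ ≤ m * σ := by nlinarith
  have hhalf : μ A / 2 ≤ μ {b | |f b + X b - z| < m * σ} := by
    refine ENNReal.le_of_add_le_add_right (a := μ A / 2)
      (ENNReal.div_ne_top (measure_ne_top _ _) two_ne_zero) ?_
    calc μ A / 2 + μ A / 2 = μ A := ENNReal.add_halves _
      _ ≤ μ (A ∩ {b | s * σ ≤ |X b|}) + μ (A \ {b | s * σ ≤ |X b|}) :=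
          measure_le_inter_add_sdiff _ _ _
      _ ≤ μ {b | |f b + X b - z| < m * σ} + μ A / 2 := by
          rw [add_comm]; exact add_le_add (measure_mono hcore) hX
  calc levyConcentration μ f σ ≤ 2 * μ A := hz
    _ = 4 * (μ A / 2) := by
        rw [show (4 : ℝ≥0∞) = 2 * 2 by norm_num, mul_assoc,
          ENNReal.mul_div_cancel two_ne_zero ENNReal.ofNat_ne_top]
    _ ≤ 4 * (m * levyConcentration μ (fun b ↦ f b + X b) σ) := by
        gcongr
        exact hhalf.trans (measure_abs_sub_lt_le_levyConcentration μ _ σ m z)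
    _ = ENNReal.ofReal (4 * m) * levyConcentration μ (fun b ↦ f b + X b) σ := by
        rw [ENNReal.ofReal_mul zero_le_four, ENNReal.ofReal_ofNat, ENNReal.ofReal_natCast,
          mul_assoc]

end LevyConcentration

section RandomizedRounding

variable {ι : Type*}

def roundingError (θ : ι → unitInterval) (ε : ι → Bool) (i : ι) : ℝ :=
  (if ε i then 1 else 0) - θ i

theorem abs_roundingError_le_one (θ : ι → unitInterval) (ε : ι → Bool) (i : ι) :
    |roundingError θ ε i| ≤ 1 := by
  have := (θ i).2
  unfold roundingError
  split_ifs <;> rw [abs_le] <;> constructor <;> linarith [this.1, this.2]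

noncomputable def fractPoint (y : ι → ℝ) (i : ι) : unitInterval :=
  ⟨Int.fract (y i), Int.fract_nonneg _, (Int.fract_lt_one _).le⟩

noncomputable def randomRound (y : ι → ℝ) (ε : ι → Bool) (i : ι) : ℤ :=
  ⌊y i⌋ + if ε i then 1 else 0

theorem cast_randomRound (y : ι → ℝ) (ε : ι → Bool) (i : ι) :
    (randomRound y ε i : ℝ) = y i + roundingError (fractPoint y) ε i := by
  rw [randomRound, roundingError, show (fractPoint y i : ℝ) = y i - ⌊y i⌋ from rfl]
  split_ifs <;> push_cast <;> ring

variable [Fintype ι]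

noncomputable def roundingMeasure (θ : ι → unitInterval) : Measure (ι → Bool) :=
  Measure.pi fun i ↦ bernoulliMeasure true false (θ i)

instance (θ : ι → unitInterval) : IsProbabilityMeasure (roundingMeasure θ) := by
  unfold roundingMeasure; infer_instance

theorem roundingMeasure_abs_sum_ge_le (θ : ι → unitInterval) (a : ι → ℝ) {u : ℝ} (hu : 0 < u) :
    roundingMeasure θ {ε | u ≤ |∑ i, a i * roundingError θ ε i|} ≤
      ENNReal.ofReal ((∑ i, a i ^ 2) / (4 * u ^ 2)) := by
  set X : ∀ i : ι, Bool → ℝ := fun i e ↦ a i * ((if e then 1 else 0) - θ i)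
  have hX0 : ∀ i, ∫ e, X i e ∂bernoulliMeasure true false (θ i) = 0 := fun i ↦ by
    simp only [X, integral_bernoulliMeasure, ↓reduceIte, smul_eq_mul, Bool.false_eq_true,
      zero_sub, mul_neg]
    ring
  have hvar : ∀ i, Var[X i; bernoulliMeasure true false (θ i)] ≤ a i ^ 2 / 4 := fun i ↦ by
    rw [variance_of_integral_eq_zero Measurable.of_discrete.aemeasurable (hX0 i),
      integral_bernoulliMeasure]
    have := (θ i).2
    simp only [X, smul_eq_mul, ↓reduceIte, Bool.false_eq_true, zero_sub, mul_neg, even_two,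
      Even.neg_pow]
    nlinarith [sq_nonneg (a i), sq_nonneg (a i * (2 * θ i - 1)), this.1, this.2]
  calc _ ≤ ENNReal.ofReal ((∑ i, Var[X i; bernoulliMeasure true false (θ i)]) / u ^ 2) :=
        meas_ge_abs_sum_pi_le_sum_variance_div_sq (fun i ↦ MemLp.of_discrete) hX0 hu
    _ ≤ ENNReal.ofReal ((∑ i, a i ^ 2 / 4) / u ^ 2) := by gcongr with i; exact hvar i
    _ = _ := by rw [← sum_div, div_div]

variable {Δ : Measure (ι → ℝ)} [SFinite Δ] {s : ℝ} (hΔ : ∀ᵐ b ∂Δ, ∀ i, |b i| ≤ s)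
  (θ : ι → unitInterval)
include hΔ

theorem lintegral_measure_inter_roundingError_le {A : Set (ι → ℝ)} (hA : MeasurableSet A)
    {u : ℝ} (hu : 0 < u) :
    ∫⁻ ε, Δ (A ∩ {b | u ≤ |∑ i, b i * roundingError θ ε i|}) ∂roundingMeasure θ ≤
      Δ A * ENNReal.ofReal (s ^ 2 * Fintype.card ι / (4 * u ^ 2)) := by
  set E : Set ((ι → Bool) × (ι → ℝ)) :=
    {p | p.2 ∈ A ∧ u ≤ |∑ i, p.2 i * roundingError θ p.1 i|}
  have hE : MeasurableSet E := by
    change MeasurableSet ({p : (ι → Bool) × (ι → ℝ) | p.2 ∈ A} ∩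
      {p | u ≤ |∑ i, p.2 i * roundingError θ p.1 i|})
    refine (measurable_snd hA).inter (measurableSet_le measurable_const ?_)
    refine (Finset.measurable_sum _ fun i _ ↦ ?_).abs
    exact ((measurable_pi_apply i).comp measurable_snd).mul
      ((Measurable.of_discrete (f := fun ε ↦ roundingError θ ε i)).comp measurable_fst)
  calc ∫⁻ ε, Δ (A ∩ {b | u ≤ |∑ i, b i * roundingError θ ε i|}) ∂roundingMeasure θ
      = (roundingMeasure θ).prod Δ E := (Measure.prod_apply hE).symm
    _ = ∫⁻ b, roundingMeasure θ {ε | b ∈ A ∧ u ≤ |∑ i, b i * roundingError θ ε i|} ∂Δ :=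
        Measure.prod_apply_symm hE
    _ ≤ ∫⁻ b, A.indicator (fun _ ↦ ENNReal.ofReal (s ^ 2 * Fintype.card ι / (4 * u ^ 2))) b ∂Δ := by
        refine lintegral_mono_ae (hΔ.mono fun b hb ↦ ?_)
        by_cases hbA : b ∈ A
        · simp only [hbA, true_and, Set.indicator_of_mem]
          refine (roundingMeasure_abs_sum_ge_le θ b hu).trans (ENNReal.ofReal_le_ofReal ?_)
          gcongr
          calc ∑ i, b i ^ 2 ≤ ∑ _i : ι, s ^ 2 :=
                sum_le_sum fun i _ ↦ sq_le_sq' (abs_le.1 (hb i)).1 (abs_le.1 (hb i)).2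
            _ = s ^ 2 * Fintype.card ι := by simp [mul_comm]
        · simp [hbA]
    _ = Δ A * ENNReal.ofReal (s ^ 2 * Fintype.card ι / (4 * u ^ 2)) := by
        rw [lintegral_indicator_const hA, mul_comm]

theorem roundingMeasure_half_lt_measure_inter_le (hs : 0 < s) {σ : ℝ} (hσ : 0 < σ)
    (hσι : (Fintype.card ι : ℝ) ≤ σ ^ 2) {A : Set (ι → ℝ)} (hA : MeasurableSet A) :
    roundingMeasure θ
      {ε | Δ A / 2 < Δ (A ∩ {b | s * σ ≤ |∑ i, b i * roundingError θ ε i|})} ≤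
      ENNReal.ofReal (1 / 2) := by
  refine meas_lt_le_of_lintegral_le_mul Measurable.of_discrete.aemeasurable
    ((lintegral_measure_inter_roundingError_le hΔ θ hA (by positivity)).trans ?_)
  have hquarter : s ^ 2 * Fintype.card ι / (4 * (s * σ) ^ 2) ≤ 1 / 2 * (1 / 2) := by
    rw [div_le_iff₀ (by positivity)]
    nlinarith [mul_le_mul_of_nonneg_left hσι (sq_nonneg s)]
  calc Δ A * ENNReal.ofReal (s ^ 2 * Fintype.card ι / (4 * (s * σ) ^ 2))
      ≤ Δ A * (ENNReal.ofReal (1 / 2) * ENNReal.ofReal (1 / 2)) := by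
        rw [← ENNReal.ofReal_mul (by norm_num)]; gcongr
    _ = Δ A / 2 * ENNReal.ofReal (1 / 2) := by
        rw [← mul_assoc, ENNReal.ofReal_div_of_pos two_pos]; simp [div_eq_mul_inv]

variable {S : (ι → ℝ) → ℝ} (hS : Measurable S) {σ μ₀ lam : ℝ} (hσ : 0 < σ)
  (hσι : (Fintype.card ι : ℝ) ≤ σ ^ 2) (hμ₀ : 0 ≤ μ₀)
  (hyp : ∀ t, σ ≤ t → Δ {b | |S b - lam| ≤ t} ≤ ENNReal.ofReal (μ₀ * t))
include hS hσ hσι hμ₀ hyp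

theorem lintegral_tsum_measure_inter_roundingError_le :
    ∫⁻ ε, ∑' r : ℕ, Δ ({b | |S b - lam| ≤ 2 ^ (r + 2) * σ} ∩
      {b | 2 ^ r * σ ≤ |∑ i, b i * roundingError θ ε i|}) ∂roundingMeasure θ ≤
      ENNReal.ofReal (2 * s ^ 2 * μ₀ * σ) := by
  rw [lintegral_tsum fun r ↦ Measurable.of_discrete.aemeasurable]
  have hterm : ∀ r : ℕ, ∫⁻ ε, Δ ({b | |S b - lam| ≤ 2 ^ (r + 2) * σ} ∩
      {b | 2 ^ r * σ ≤ |∑ i, b i * roundingError θ ε i|}) ∂roundingMeasure θ ≤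
      ENNReal.ofReal (s ^ 2 * μ₀ * σ) * 2⁻¹ ^ r := fun r ↦ by
    have hball : MeasurableSet {b | |S b - lam| ≤ 2 ^ (r + 2) * σ} :=
      measurableSet_le (hS.sub_const lam).abs measurable_const
    have hr : σ ≤ 2 ^ (r + 2) * σ := le_mul_of_one_le_left hσ.le (one_le_pow₀ one_le_two)
    refine (lintegral_measure_inter_roundingError_le hΔ θ hball (by positivity)).trans ?_
    refine (mul_le_mul_left (hyp _ hr) _).trans ?_
    rw [← ENNReal.ofReal_mul (by positivity), ← ENNReal.inv_pow, ← ENNReal.ofReal_ofNat 2,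
      ← ENNReal.ofReal_pow zero_le_two, ← ENNReal.ofReal_inv_of_pos (by positivity),
      ← ENNReal.ofReal_mul (by positivity)]
    apply ENNReal.ofReal_le_ofReal
    calc μ₀ * (2 ^ (r + 2) * σ) * (s ^ 2 * Fintype.card ι / (4 * (2 ^ r * σ) ^ 2))
        = μ₀ * s ^ 2 * Fintype.card ι / (2 ^ r * σ) := by field_simp; ring
      _ ≤ μ₀ * s ^ 2 * σ ^ 2 / (2 ^ r * σ) := by gcongr
      _ = s ^ 2 * μ₀ * σ * (2 ^ r)⁻¹ := by field_simp
  calc _ ≤ ∑' r : ℕ, ENNReal.ofReal (s ^ 2 * μ₀ * σ) * 2⁻¹ ^ r := ENNReal.tsum_le_tsum hterm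
    _ = ENNReal.ofReal (2 * s ^ 2 * μ₀ * σ) := by
      rw [ENNReal.tsum_mul_left, ENNReal.tsum_geometric, ENNReal.one_sub_inv_two, inv_inv,
        mul_comm, ← ENNReal.ofReal_ofNat 2, ← ENNReal.ofReal_mul zero_le_two]
      ring_nf

theorem exists_good_rounding (hs : 0 < s) (z : ℝ) :
    ∃ ε : ι → Bool,
      ∑' r : ℕ, Δ ({b | |S b - lam| ≤ 2 ^ (r + 2) * σ} ∩
        {b | 2 ^ r * σ ≤ |∑ i, b i * roundingError θ ε i|}) ≤
          ENNReal.ofReal (16 * s ^ 2 * μ₀ * σ) ∧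
      Δ ({b | |S b - z| ≤ σ} ∩ {b | s * σ ≤ |∑ i, b i * roundingError θ ε i|}) ≤
        Δ {b | |S b - z| ≤ σ} / 2 ∧
      |∑ i, roundingError θ ε i| < 2 * σ := by
  set A := {b | |S b - z| ≤ σ}
  set X : (ι → Bool) → (ι → ℝ) → ℝ := fun ε b ↦ ∑ i, b i * roundingError θ ε i
  have htail : roundingMeasure θ {ε | ENNReal.ofReal (16 * s ^ 2 * μ₀ * σ) <
      ∑' r : ℕ, Δ ({b | |S b - lam| ≤ 2 ^ (r + 2) * σ} ∩ {b | 2 ^ r * σ ≤ |X ε b|})} ≤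
      ENNReal.ofReal (1 / 8) := by
    refine meas_lt_le_of_lintegral_le_mul Measurable.of_discrete.aemeasurable
      ((lintegral_tsum_measure_inter_roundingError_le hΔ θ hS hσ hσι hμ₀ hyp).trans_eq ?_)
    rw [← ENNReal.ofReal_mul (by positivity)]
    ring_nf
  have hconc : roundingMeasure θ {ε | Δ A / 2 < Δ (A ∩ {b | s * σ ≤ |X ε b|})} ≤
      ENNReal.ofReal (1 / 2) :=
    roundingMeasure_half_lt_measure_inter_le hΔ θ hs hσ hσι
      (measurableSet_le (hS.sub_const z).abs measurable_const)
  have hsum : roundingMeasure θ {ε | 2 * σ ≤ |∑ i, 1 * roundingError θ ε i|} ≤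
      ENNReal.ofReal (1 / 16) := by
    refine (roundingMeasure_abs_sum_ge_le θ 1 (by positivity)).trans
      (ENNReal.ofReal_le_ofReal ?_)
    simp only [Pi.one_apply, one_pow, sum_const, card_univ, nsmul_eq_mul, mul_one]
    rw [div_le_iff₀ (by positivity)]
    linarith
  have hlt : ENNReal.ofReal (1 / 8) + ENNReal.ofReal (1 / 2) + ENNReal.ofReal (1 / 16) < 1 := by
    rw [← ENNReal.ofReal_add (by norm_num) (by norm_num),
      ← ENNReal.ofReal_add (by norm_num) (by norm_num), ENNReal.ofReal_lt_one]
    norm_num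
  have hbad := ((measure_union_le _ _).trans (add_le_add
    ((measure_union_le _ _).trans (add_le_add htail hconc)) hsum)).trans_lt hlt
  obtain ⟨ε, hε⟩ := (Set.ne_univ_iff_exists_notMem _).1
    (ne_of_apply_ne _ (hbad.trans_eq measure_univ.symm).ne)
  simp only [Set.mem_union, Set.mem_ofPred_eq, not_or, not_lt, one_mul, not_le] at hε
  exact ⟨ε, hε.1.1, hε.1.2, hε.2⟩

end RandomizedRounding

/-- Randomized rounding preserving anticoncentration: there exist `c, C > 0` depending
only on `s` such that for any `y ∈ ℝⁿ`, `μ₀ > 0`, `λ ∈ ℝ` and any distribution `Δ`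
supported in `[-s,s]ⁿ` with `P[|∑ bᵢyᵢ - λ| ≤ t] ≤ μ₀ t` for all `t ≥ √n`, there is
`y' ∈ ℤⁿ` with (1) `‖y - y'‖_∞ ≤ 1`; (2) `P[|∑ bᵢy'ᵢ - λ| ≤ t] ≤ Cμ₀t` for `t ≥ √n`;
(3) `L(∑ bᵢy'ᵢ, √n) ≥ c·L(∑ bᵢyᵢ, √n)`; (4) `|∑ yᵢ - ∑ y'ᵢ| ≤ C√n`. -/
theorem stmt_11 (s : ℝ) (hs : 0 < s) :
    ∃ c C : ℝ, 0 < c ∧ 0 < C ∧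
      ∀ (n : ℕ), 0 < n →
      ∀ Δ : Measure (Fin n → ℝ), IsProbabilityMeasure Δ →
      (∀ᵐ b ∂Δ, ∀ i, |b i| ≤ s) →
      ∀ (y : Fin n → ℝ) (μ₀ lam : ℝ), 0 < μ₀ →
      (∀ t : ℝ, Real.sqrt n ≤ t →
        Δ {b | |(∑ i, b i * y i) - lam| ≤ t} ≤ ENNReal.ofReal (μ₀ * t)) →
      ∃ y' : Fin n → ℤ,
        (∀ i, |y i - (y' i : ℝ)| ≤ 1) ∧
        (∀ t : ℝ, Real.sqrt n ≤ t →
          Δ {b | |(∑ i, b i * (y' i : ℝ)) - lam| ≤ t} ≤ ENNReal.ofReal (C * μ₀ * t)) ∧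
        (ENNReal.ofReal c * ⨆ z : ℝ, Δ {b | |(∑ i, b i * y i) - z| ≤ Real.sqrt n} ≤
          ⨆ z : ℝ, Δ {b | |(∑ i, b i * (y' i : ℝ)) - z| ≤ Real.sqrt n}) ∧
        |(∑ i, y i) - (∑ i, (y' i : ℝ))| ≤ C * Real.sqrt n := by
  -- `c`: `⌈s⌉₊ + 1` balls of radius `√n` cover one of radius `(s + 1) √n`, and two halvings
  -- lose a factor `4`; `C`: Markov at `8` times the expected tail `2 s² μ₀ √n`, plus `2` for `2t`.
  refine ⟨1 / (4 * (⌈s⌉₊ + 1)), 16 * s ^ 2 + 2, by positivity, by positivity, ?_⟩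
  intro n hn Δ _ hΔ y μ₀ lam hμ₀ hyp
  set σ := Real.sqrt n
  have hσ : 0 < σ := Real.sqrt_pos.2 (by exact_mod_cast hn)
  set S : (Fin n → ℝ) → ℝ := fun b ↦ ∑ i, b i * y i
  obtain ⟨z, hz⟩ := exists_levyConcentration_le_two_mul Δ S σ
  obtain ⟨ε, htail, hconc, hsum⟩ := exists_good_rounding hΔ (fractPoint y) (by fun_prop) hσ
    (by simp [σ]) hμ₀.le hyp hs z
  have hS' : ∀ b : Fin n → ℝ, ∑ i, b i * (randomRound y ε i : ℝ) =
      S b + ∑ i, b i * roundingError (fractPoint y) ε i := fun b ↦ by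
    simp only [S, cast_randomRound, mul_add, sum_add_distrib]
  refine ⟨randomRound y ε, fun i ↦ ?_, fun t ht ↦ ?_, ?_, ?_⟩
  · rw [cast_randomRound, sub_add_cancel_left, abs_neg]
    exact abs_roundingError_le_one _ _ _
  · simpa only [hS'] using
      measure_abs_add_sub_le_of_tsum_le Δ S _ hσ hμ₀.le (by positivity) hyp htail ht
  · simp_rw [hS']
    refine ENNReal.ofReal_one_div_mul_le (by positivity) ?_
    have hm : s + 1 ≤ ((⌈s⌉₊ + 1 : ℕ) : ℝ) := by push_cast; linarith [Nat.le_ceil s]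
    have hL := levyConcentration_le_mul_of_measure_inter_le Δ S _ hσ.le hm hz hconc
    rwa [Nat.cast_add_one] at hL
  · simp only [cast_randomRound, sum_add_distrib, sub_add_cancel_left, abs_neg]
    nlinarith [mul_le_mul_of_nonneg_left hσ.le (sq_nonneg s)]
end
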